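/- arXiv:2601.19272 — 6 statements merged into one kernel-verified Lean document; each statement's English description precedes it below -/
import Mathlib

section
/- There exists a constant B_n > 0 depending only on the dimension n such that for every λ ∈ (0,1), every cube Q ⊂ ℝⁿ, and every measurable set E ⊂ Q with 0 < |E| ≤ λ|Q|, one has |{x ∈ Q : M_Q χ_E(x) > λ}| ≥ (1 + (1-λ)/(B_n λ)) |E|. -/
open MeasureTheory Set Filter
open scoped ENNReal Topology

noncomputable section

/-- A cube in `ℝⁿ` with sides parallel to the coordinate axes (positive side length). -/
def IsCube {n : ℕ} (Q : Set (Fin n → ℝ)) : Prop :=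
  ∃ (a : Fin n → ℝ) (h : ℝ), 0 < h ∧ Q = Set.Icc a (fun i => a i + h)

/-- The Hardy–Littlewood maximal operator: `Mf(x) = sup_{Q ∋ x} (1/|Q|) ∫_Q f`. -/
def maximal {n : ℕ} (f : (Fin n → ℝ) → ℝ≥0∞) (x : Fin n → ℝ) : ℝ≥0∞ :=
  ⨆ (Q : Set (Fin n → ℝ)) (_ : IsCube Q) (_ : x ∈ Q), (∫⁻ y in Q, f y) / volume Q

/-- The Hardy–Littlewood maximal operator restricted to a cube `Q`. -/
def maximalOn {n : ℕ} (Q : Set (Fin n → ℝ)) (f : (Fin n → ℝ) → ℝ≥0∞)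
    (x : Fin n → ℝ) : ℝ≥0∞ :=
  ⨆ (R : Set (Fin n → ℝ)) (_ : IsCube R) (_ : R ⊆ Q) (_ : x ∈ R),
    (∫⁻ y in R, f y) / volume R

/-- The non-increasing rearrangement `g*(t) = inf {α > 0 : |{y : g y > α}| ≤ t}`. -/
def rearr {n : ℕ} (g : (Fin n → ℝ) → ℝ≥0∞) (t : ℝ≥0∞) : ℝ≥0∞ :=
  sInf {α : ℝ≥0∞ | 0 < α ∧ volume {y | α < g y} ≤ t}

/-- The `λ`-median (local) maximal operator `m_λ f(x) = sup_{Q ∋ x} (f χ_Q)*(λ|Q|)`. -/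
def mMed {n : ℕ} (la : ℝ) (f : (Fin n → ℝ) → ℝ≥0∞) (x : Fin n → ℝ) : ℝ≥0∞ :=
  ⨆ (Q : Set (Fin n → ℝ)) (_ : IsCube Q) (_ : x ∈ Q),
    rearr (Q.indicator f) (ENNReal.ofReal la * volume Q)

/-- The (absolute value of a) real function viewed as an `ℝ≥0∞`-valued function. -/
def toE {n : ℕ} (f : (Fin n → ℝ) → ℝ) : (Fin n → ℝ) → ℝ≥0∞ :=
  fun y => ENNReal.ofReal |f y|

/-- `x` is a Lebesgue density point of the set `E`. -/
def IsDensityPoint {n : ℕ} (E : Set (Fin n → ℝ)) (x : Fin n → ℝ) : Prop :=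
  Tendsto (fun r : ℝ => volume (E ∩ Metric.ball x r) / volume (Metric.ball x r))
    (𝓝[>] (0 : ℝ)) (𝓝 1)

/-- `x` is a point of approximate continuity of `f`. -/
def ApproxContinuousAt {n : ℕ} (f : (Fin n → ℝ) → ℝ) (x : Fin n → ℝ) : Prop :=
  ∀ ε : ℝ, 0 < ε →
    Tendsto (fun r : ℝ =>
        volume ({y | ε ≤ |f y - f x|} ∩ Metric.ball x r) / volume (Metric.ball x r))
      (𝓝[>] (0 : ℝ)) (𝓝 0)

/-- A Banach function space over `ℝⁿ`, described by its (Luxemburg) function norm on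
nonnegative extended-real-valued measurable functions. The ideal property is encoded by
`mono`, the Fatou property by `fatou`, and the saturation property by `saturation`. -/
structure BanachFunctionSpace (n : ℕ) where
  N : ((Fin n → ℝ) → ℝ≥0∞) → ℝ≥0∞
  add_le : ∀ f g, N (fun x => f x + g x) ≤ N f + N g
  smul_eq : ∀ (c : ℝ≥0∞), c ≠ ∞ → ∀ f, N (fun x => c * f x) = c * N f
  mono : ∀ f g, (∀ᵐ x ∂(volume : Measure (Fin n → ℝ)), f x ≤ g x) → N f ≤ N g
  eq_zero : ∀ f, N f = 0 → f =ᵐ[(volume : Measure (Fin n → ℝ))] 0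
  fatou : ∀ F : ℕ → ((Fin n → ℝ) → ℝ≥0∞),
    (∀ j, ∀ᵐ x ∂(volume : Measure (Fin n → ℝ)), F j x ≤ F (j + 1) x) →
    N (fun x => ⨆ j, F j x) = ⨆ j, N (F j)
  saturation : ∀ E : Set (Fin n → ℝ), MeasurableSet E → 0 < volume E →
    ∃ F, F ⊆ E ∧ MeasurableSet F ∧ 0 < volume F ∧ N (F.indicator 1) ≠ ∞

/-- The associate (Köthe dual) norm of a function norm `N`:
`‖g‖_{X'} = sup_{‖h‖_X ≤ 1} ∫ g h`. -/
def assocOf {n : ℕ} (N : ((Fin n → ℝ) → ℝ≥0∞) → ℝ≥0∞)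
    (g : (Fin n → ℝ) → ℝ≥0∞) : ℝ≥0∞ :=
  ⨆ (h : (Fin n → ℝ) → ℝ≥0∞) (_ : N h ≤ 1), ∫⁻ x, g x * h x

/-- The norm of the space `X^{1/p}`: `‖f‖_{X^{1/p}} = ‖|f|^p‖_X^{1/p}`. -/
def powOf {n : ℕ} (N : ((Fin n → ℝ) → ℝ≥0∞) → ℝ≥0∞) (p : ℝ)
    (f : (Fin n → ℝ) → ℝ≥0∞) : ℝ≥0∞ :=
  (N fun x => f x ^ p) ^ (1 / p)

/-- An operator `T` is bounded with respect to the function norm `N`. -/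
def BoundedOn {n : ℕ} (N : ((Fin n → ℝ) → ℝ≥0∞) → ℝ≥0∞)
    (T : ((Fin n → ℝ) → ℝ≥0∞) → (Fin n → ℝ) → ℝ≥0∞) : Prop :=
  ∃ C : ℝ, 0 < C ∧ ∀ f, N (T f) ≤ ENNReal.ofReal C * N f

/-- `X` is `p`-convex. -/
def PConvex {n : ℕ} (N : ((Fin n → ℝ) → ℝ≥0∞) → ℝ≥0∞) (p : ℝ) : Prop :=
  ∀ f g, N (fun x => (f x ^ p + g x ^ p) ^ (1 / p)) ≤ (N f ^ p + N g ^ p) ^ (1 / p)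

/-- `X` is `q`-concave. -/
def QConcave {n : ℕ} (N : ((Fin n → ℝ) → ℝ≥0∞) → ℝ≥0∞) (q : ℝ) : Prop :=
  ∀ f g, (N f ^ q + N g ^ q) ^ (1 / q) ≤ N (fun x => (f x ^ q + g x ^ q) ^ (1 / q))

end


namespace Stmt0Aux

open Metric

variable {n : ℕ}

lemma cb_eq_Icc (c : Fin n → ℝ) {r : ℝ} (hr : 0 ≤ r) :
    Metric.closedBall c r = Set.Icc (fun i => c i - r) (fun i => c i + r) := by
  rw [closedBall_pi _ hr, ← Set.pi_univ_Icc]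
  refine Set.pi_congr rfl fun i _ => Real.closedBall_eq_Icc

lemma isCube_cb (c : Fin n → ℝ) {r : ℝ} (hr : 0 < r) :
    IsCube (Metric.closedBall c r) := by
  refine ⟨fun i => c i - r, 2 * r, by positivity, ?_⟩
  rw [cb_eq_Icc c hr.le]
  have : (fun i => c i - r + 2 * r) = fun i => c i + r := by ext i; ring
  rw [this]

lemma isCube_iff {Q : Set (Fin n → ℝ)} (h : IsCube Q) :
    ∃ c r, 0 < r ∧ Q = Metric.closedBall c r := by
  obtain ⟨a, h, hh, rfl⟩ := h
  refine ⟨fun i => a i + h / 2, h / 2, by positivity, ?_⟩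
  rw [cb_eq_Icc _ (by positivity)]
  have e1 : (fun i => (a i + h / 2) - h / 2) = a := by ext i; ring
  have e2 : (fun i => (a i + h / 2) + h / 2) = fun i => a i + h := by ext i; ring
  rw [e1, e2]

lemma vol_cb (c : Fin n → ℝ) {r : ℝ} (hr : 0 ≤ r) :
    volume (Metric.closedBall c r) = ENNReal.ofReal (2 * r) ^ n := by
  rw [cb_eq_Icc c hr, Real.volume_Icc_pi]
  simp only [show ∀ x : ℝ, x + r - (x - r) = 2 * r from fun x => by ring]
  simp [Finset.prod_const]

lemma vol_cb_pos (c : Fin n → ℝ) {r : ℝ} (hr : 0 < r) :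
    0 < volume (Metric.closedBall c r) := by
  rw [vol_cb c hr.le]
  have : (0:ℝ≥0∞) < ENNReal.ofReal (2 * r) := by
    simp only [ENNReal.ofReal_pos]; linarith
  exact ENNReal.pow_pos this n

lemma vol_cb_ne_top (c : Fin n → ℝ) {r : ℝ} (hr : 0 ≤ r) :
    volume (Metric.closedBall c r) ≠ ∞ := by
  rw [vol_cb c hr]
  exact (ENNReal.pow_ne_top ENNReal.ofReal_ne_top)

lemma radius_le (hn : 0 < n) {c c₀ : Fin n → ℝ} {ρ r₀ : ℝ} (hρ : 0 ≤ ρ)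
    (h : Metric.closedBall c ρ ⊆ Metric.closedBall c₀ r₀) : ρ ≤ r₀ := by
  set i : Fin n := ⟨0, hn⟩
  have h1 : (fun j => c j + ρ) ∈ Metric.closedBall c ρ := by
    rw [mem_closedBall]
    rw [dist_pi_le_iff hρ]
    intro j
    simp [Real.dist_eq, abs_of_nonneg hρ]
  have h2 : (fun j => c j - ρ) ∈ Metric.closedBall c ρ := by
    rw [mem_closedBall, dist_pi_le_iff hρ]
    intro j
    simp [Real.dist_eq, abs_le]
    exact hρ
  have g1 := (dist_le_pi_dist (fun j => c j + ρ) c₀ i).trans (h h1)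
  have g2 := (dist_le_pi_dist (fun j => c j - ρ) c₀ i).trans (h h2)
  rw [Real.dist_eq, abs_le] at g1 g2
  linarith [g1.1, g1.2, g2.1, g2.2]

lemma center_dist (hn : 0 < n) {c c₀ : Fin n → ℝ} {ρ r₀ : ℝ} (hρ : 0 ≤ ρ)
    (h : Metric.closedBall c ρ ⊆ Metric.closedBall c₀ r₀) (i : Fin n) :
    |c i - c₀ i| ≤ r₀ - ρ := by
  have h1 : (fun j => c j + ρ) ∈ Metric.closedBall c ρ := by
    rw [mem_closedBall, dist_pi_le_iff hρ]; intro j; simp [Real.dist_eq, abs_of_nonneg hρ]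
  have h2 : (fun j => c j - ρ) ∈ Metric.closedBall c ρ := by
    rw [mem_closedBall, dist_pi_le_iff hρ]; intro j; simp [Real.dist_eq, abs_le]
    exact hρ
  have g1 := (dist_le_pi_dist (fun j => c j + ρ) c₀ i).trans (h h1)
  have g2 := (dist_le_pi_dist (fun j => c j - ρ) c₀ i).trans (h h2)
  rw [Real.dist_eq, abs_le] at g1 g2
  rw [abs_le]
  constructor <;> linarith [g1.1, g1.2, g2.1, g2.2]

lemma setLIntegral_ind {E : Set (Fin n → ℝ)} (hE : MeasurableSet E)
    (R : Set (Fin n → ℝ)) :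
    ∫⁻ y in R, E.indicator 1 y = volume (E ∩ R) := by
  rw [lintegral_indicator hE]
  simp only [Pi.one_apply]
  rw [setLIntegral_one, Measure.restrict_apply hE]

lemma lt_maximalOn {Q E R : Set (Fin n → ℝ)} (hE : MeasurableSet E) (hR : IsCube R)
    (hRQ : R ⊆ Q) {x : Fin n → ℝ} (hx : x ∈ R) {l : ℝ≥0∞}
    (h : l < volume (E ∩ R) / volume R) : l < maximalOn Q (E.indicator 1) x := by
  refine h.trans_le ?_
  rw [← setLIntegral_ind hE R]
  exact le_iSup_of_le R (le_iSup_of_le hR (le_iSup_of_le hRQ (le_iSup_of_le hx le_rfl)))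

lemma abs_clamp {a b y s t : ℝ} (hs : 0 ≤ s) (hst : s ≤ t)
    (h1 : |y - a| ≤ s) (h2 : |y - b| ≤ t) :
    |y - max (b - (t - s)) (min (b + (t - s)) a)| ≤ s := by
  rw [abs_le] at h1 h2 ⊢
  rcases le_total a (b - (t - s)) with h | h
  · rw [min_eq_right (by linarith), max_eq_left (by linarith)]
    constructor <;> linarith
  rcases le_total (b + (t - s)) a with h' | h'
  · rw [min_eq_left h', max_eq_right (by linarith)]
    constructor <;> linarith
  · rw [min_eq_right h', max_eq_right h]
    constructor <;> linarith

lemma clamp_center {a b s t : ℝ} (hs : 0 ≤ s) (hst : s ≤ t) :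
    |max (b - (t - s)) (min (b + (t - s)) a) - b| ≤ t - s := by
  rw [abs_le]
  rcases le_total a (b - (t - s)) with h | h
  · rw [min_eq_right (by linarith), max_eq_left (by linarith)]
    constructor <;> linarith
  rcases le_total (b + (t - s)) a with h' | h'
  · rw [min_eq_left h', max_eq_right (by linarith)]
    constructor <;> linarith
  · rw [min_eq_right h', max_eq_right h]
    constructor <;> linarith

/-- Given a ball `closedBall c r ⊆ closedBall c₀ r₀` and `r ≤ s ≤ r₀`, there is a ball of
radius `s` inside the big ball, containing `closedBall c s ∩ closedBall c₀ r₀` as well as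
`closedBall c r`. -/
lemma exists_intermediate_ball (c₀ c : Fin n → ℝ) {r₀ r s : ℝ} (hr : 0 ≤ r) (hs : r ≤ s)
    (hsr₀ : s ≤ r₀) :
    ∃ c' : Fin n → ℝ, Metric.closedBall c' s ⊆ Metric.closedBall c₀ r₀ ∧
      Metric.closedBall c s ∩ Metric.closedBall c₀ r₀ ⊆ Metric.closedBall c' s ∧
      Metric.closedBall c r ∩ Metric.closedBall c₀ r₀ ⊆ Metric.closedBall c' s := by
  have hs0 : (0:ℝ) ≤ s := hr.trans hs
  set c' : Fin n → ℝ := fun i => max (c₀ i - (r₀ - s)) (min (c₀ i + (r₀ - s)) (c i)) with hc'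
  have hsub2 : Metric.closedBall c s ∩ Metric.closedBall c₀ r₀ ⊆ Metric.closedBall c' s := by
    intro y hy
    obtain ⟨hy1, hy2⟩ := hy
    rw [mem_closedBall] at hy1 hy2 ⊢
    rw [dist_pi_le_iff hs0]
    intro i
    have g1 := (dist_le_pi_dist y c i).trans hy1
    have g2 := (dist_le_pi_dist y c₀ i).trans hy2
    rw [Real.dist_eq] at g1 g2 ⊢
    exact abs_clamp hs0 hsr₀ g1 g2
  refine ⟨c', ?_, hsub2, fun y hy => hsub2 ⟨closedBall_subset_closedBall hs hy.1, hy.2⟩⟩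
  intro y hy
  rw [mem_closedBall, dist_pi_le_iff (hs0.trans hsr₀)]
  intro i
  have hyi := (dist_le_pi_dist y c' i).trans (mem_closedBall.1 hy)
  have hc := clamp_center (a := c i) (b := c₀ i) hs0 hsr₀
  rw [Real.dist_eq] at hyi ⊢
  rw [abs_le] at hyi hc ⊢
  simp only [hc'] at hyi
  constructor <;> linarith [hc.1, hc.2, hyi.1, hyi.2]

lemma continuousOn_of_dominated {f g : ℝ → ℝ} {s : Set ℝ} (hg : ContinuousOn g s)
    (h : ∀ a ∈ s, ∀ b ∈ s, a ≤ b → 0 ≤ f b - f a ∧ f b - f a ≤ g b - g a) :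
    ContinuousOn f s := by
  have key : ∀ a ∈ s, ∀ b ∈ s, |f b - f a| ≤ |g b - g a| := by
    intro a ha b hb
    rcases le_total a b with hab | hab
    · obtain ⟨h1, h2⟩ := h a ha b hb hab
      rw [abs_of_nonneg h1]
      exact h2.trans (le_abs_self _)
    · obtain ⟨h1, h2⟩ := h b hb a ha hab
      rw [abs_sub_comm, abs_of_nonneg h1, abs_sub_comm]
      exact h2.trans (le_abs_self _)
  intro x hx
  have hgx := hg x hx
  rw [Metric.continuousWithinAt_iff] at hgx ⊢
  intro ε hε
  obtain ⟨δ, hδ, hδ'⟩ := hgx ε hε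
  refine ⟨δ, hδ, fun {y} hy hyd => ?_⟩
  have hgg := hδ' hy hyd
  rw [Real.dist_eq] at hgg ⊢
  exact lt_of_le_of_lt (key x hx y hy) hgg

lemma exists_avg_eq (hn : 0 < n) {E : Set (Fin n → ℝ)} (hE : MeasurableSet E)
    (c₀ c : Fin n → ℝ) {r₀ r l : ℝ} (hr : 0 < r) (hl : 0 < l)
    (hsub : Metric.closedBall c r ⊆ Metric.closedBall c₀ r₀)
    (h0 : ENNReal.ofReal l * volume (Metric.closedBall c r)
        ≤ volume (E ∩ Metric.closedBall c r))
    (h1 : volume (E ∩ Metric.closedBall c₀ r₀)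
        ≤ ENNReal.ofReal l * volume (Metric.closedBall c₀ r₀)) :
    ∃ c' : Fin n → ℝ, ∃ r' : ℝ, r ≤ r' ∧
      Metric.closedBall c r ⊆ Metric.closedBall c' r' ∧
      Metric.closedBall c' r' ⊆ Metric.closedBall c₀ r₀ ∧
      volume (E ∩ Metric.closedBall c' r')
        = ENNReal.ofReal l * volume (Metric.closedBall c' r') := by
  have hrr₀ : r ≤ r₀ := radius_le hn hr.le hsub
  have hr₀ : 0 < r₀ := hr.trans_le hrr₀
  set cc : ℝ → (Fin n → ℝ) := fun t i => c i + t * (c₀ i - c i) with hcc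
  set ρ : ℝ → ℝ := fun t => r + t * (r₀ - r) with hρdef
  have hρr : ∀ t, 0 ≤ t → r ≤ ρ t := by
    intro t ht
    simp only [hρdef]
    nlinarith
  have hρpos : ∀ t, 0 ≤ t → 0 < ρ t := fun t ht => hr.trans_le (hρr t ht)
  have hcenter : ∀ i, |c i - c₀ i| ≤ r₀ - r := center_dist hn hr.le hsub
  have hmono : ∀ s t, 0 ≤ s → s ≤ t → Metric.closedBall (cc s) (ρ s) ⊆
      Metric.closedBall (cc t) (ρ t) := by
    intro s t hs hst
    apply closedBall_subset_closedBall'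
    have hdist : dist (cc s) (cc t) ≤ (t - s) * (r₀ - r) := by
      rw [dist_pi_le_iff (by nlinarith)]
      intro i
      rw [Real.dist_eq]
      have : cc s i - cc t i = -((t - s) * (c₀ i - c i)) := by simp only [hcc]; ring
      rw [this, abs_neg, abs_mul, abs_of_nonneg (by linarith)]
      have := hcenter i
      rw [abs_sub_comm] at this
      nlinarith [abs_nonneg (c₀ i - c i), this]
    have : ρ s + (t - s) * (r₀ - r) = ρ t := by simp only [hρdef]; ring
    linarith [hdist]
  have hbig : ∀ t, 0 ≤ t → t ≤ 1 → Metric.closedBall (cc t) (ρ t) ⊆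
      Metric.closedBall c₀ r₀ := by
    intro t ht ht1
    apply closedBall_subset_closedBall'
    have hdist : dist (cc t) c₀ ≤ (1 - t) * (r₀ - r) := by
      rw [dist_pi_le_iff (by nlinarith)]
      intro i
      rw [Real.dist_eq]
      have : cc t i - c₀ i = (1 - t) * (c i - c₀ i) := by simp only [hcc]; ring
      rw [this, abs_mul, abs_of_nonneg (by linarith)]
      nlinarith [abs_nonneg (c i - c₀ i), hcenter i]
    have : ρ t + (1 - t) * (r₀ - r) = r₀ := by simp only [hρdef]; ring
    linarith [hdist]
  have hcc0 : cc 0 = c := by funext i; simp [hcc]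
  have hρ0 : ρ 0 = r := by simp [hρdef]
  have hcc1 : cc 1 = c₀ := by funext i; simp [hcc]
  have hρ1 : ρ 1 = r₀ := by simp [hρdef]
  set f : ℝ → ℝ := fun t => (volume (E ∩ Metric.closedBall (cc t) (ρ t))).toReal with hf
  set g : ℝ → ℝ := fun t => (volume (Metric.closedBall (cc t) (ρ t))).toReal with hg
  have hEfin : ∀ t, 0 ≤ t → volume (E ∩ Metric.closedBall (cc t) (ρ t)) ≠ ⊤ := by
    intro t ht
    exact ne_top_of_le_ne_top (vol_cb_ne_top _ (hρpos t ht).le) (measure_mono inter_subset_right)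
  have hgeq : ∀ t, 0 ≤ t → g t = (2 * ρ t) ^ n := by
    intro t ht
    simp only [hg]
    rw [vol_cb _ (hρpos t ht).le, ENNReal.toReal_pow,
      ENNReal.toReal_ofReal (by linarith [hρpos t ht])]
  have hgpos : ∀ t, 0 ≤ t → 0 < g t := by
    intro t ht
    rw [hgeq t ht]
    exact pow_pos (by linarith [hρpos t ht]) n
  have hgcont : ContinuousOn g (Icc 0 1) := by
    apply ContinuousOn.congr (f := fun t : ℝ => (2 * (r + t * (r₀ - r))) ^ n)
    · fun_prop
    · intro t ht
      exact hgeq t ht.1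
  have hdom : ∀ a ∈ Icc (0:ℝ) 1, ∀ b ∈ Icc (0:ℝ) 1, a ≤ b →
      0 ≤ f b - f a ∧ f b - f a ≤ g b - g a := by
    intro a ha b hb hab
    have hsub' := hmono a b ha.1 hab
    have hBa := vol_cb_ne_top (cc a) (hρpos a ha.1).le
    have hBb := vol_cb_ne_top (cc b) (hρpos b hb.1).le
    have hmain : volume (E ∩ Metric.closedBall (cc b) (ρ b)) +
        volume (Metric.closedBall (cc a) (ρ a)) ≤
        volume (E ∩ Metric.closedBall (cc a) (ρ a)) +
        volume (Metric.closedBall (cc b) (ρ b)) := by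
      have hsplit : E ∩ Metric.closedBall (cc b) (ρ b) ⊆
          (E ∩ Metric.closedBall (cc a) (ρ a)) ∪
          (Metric.closedBall (cc b) (ρ b) \ Metric.closedBall (cc a) (ρ a)) := by
        intro y hy
        by_cases hya : y ∈ Metric.closedBall (cc a) (ρ a)
        · exact Or.inl ⟨hy.1, hya⟩
        · exact Or.inr ⟨hy.2, hya⟩
      calc volume (E ∩ Metric.closedBall (cc b) (ρ b)) +
            volume (Metric.closedBall (cc a) (ρ a))
          ≤ (volume (E ∩ Metric.closedBall (cc a) (ρ a)) +
            volume (Metric.closedBall (cc b) (ρ b) \ Metric.closedBall (cc a) (ρ a))) +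
            volume (Metric.closedBall (cc a) (ρ a)) := by
            gcongr
            exact (measure_mono hsplit).trans (measure_union_le _ _)
        _ = volume (E ∩ Metric.closedBall (cc a) (ρ a)) +
            (volume (Metric.closedBall (cc b) (ρ b) \ Metric.closedBall (cc a) (ρ a)) +
            volume (Metric.closedBall (cc a) (ρ a))) := by ring
        _ = volume (E ∩ Metric.closedBall (cc a) (ρ a)) +
            volume (Metric.closedBall (cc b) (ρ b)) := by
            congr 1
            rw [measure_diff hsub' measurableSet_closedBall.nullMeasurableSet hBa]
            exact tsub_add_cancel_of_le (measure_mono hsub')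
    constructor
    · simp only [hf]
      have hmsub : E ∩ Metric.closedBall (cc a) (ρ a) ⊆ E ∩ Metric.closedBall (cc b) (ρ b) :=
        inter_subset_inter Subset.rfl hsub'
      have h2 := ENNReal.toReal_mono (hEfin b hb.1) (measure_mono (μ := volume) hmsub)
      linarith
    · have hfin1 : volume (E ∩ Metric.closedBall (cc b) (ρ b)) +
          volume (Metric.closedBall (cc a) (ρ a)) ≠ ⊤ :=
        ENNReal.add_ne_top.2 ⟨hEfin b hb.1, hBa⟩
      have hfin2 : volume (E ∩ Metric.closedBall (cc a) (ρ a)) +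
          volume (Metric.closedBall (cc b) (ρ b)) ≠ ⊤ :=
        ENNReal.add_ne_top.2 ⟨hEfin a ha.1, hBb⟩
      have := ENNReal.toReal_mono hfin2 hmain
      rw [ENNReal.toReal_add (hEfin b hb.1) hBa, ENNReal.toReal_add (hEfin a ha.1) hBb] at this
      simp only [hf, hg]
      linarith
  have hfcont : ContinuousOn f (Icc 0 1) := continuousOn_of_dominated hgcont hdom
  set φ : ℝ → ℝ := fun t => f t / g t with hφ
  have hφcont : ContinuousOn φ (Icc 0 1) :=
    hfcont.div hgcont (fun t ht => (hgpos t ht.1).ne')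
  have hφ0 : l ≤ φ 0 := by
    have h0'' : ENNReal.ofReal l * volume (Metric.closedBall (cc 0) (ρ 0))
        ≤ volume (E ∩ Metric.closedBall (cc 0) (ρ 0)) := by rw [hcc0, hρ0]; exact h0
    have h0' : l * g 0 ≤ f 0 := by
      have := ENNReal.toReal_mono (hEfin 0 le_rfl) h0''
      rw [ENNReal.toReal_mul, ENNReal.toReal_ofReal hl.le] at this
      exact this
    rw [hφ, le_div_iff₀ (hgpos 0 le_rfl)]
    exact h0'
  have hφ1 : φ 1 ≤ l := by
    have h1'' : volume (E ∩ Metric.closedBall (cc 1) (ρ 1))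
        ≤ ENNReal.ofReal l * volume (Metric.closedBall (cc 1) (ρ 1)) := by
      rw [hcc1, hρ1]; exact h1
    have h1' : f 1 ≤ l * g 1 := by
      have hfin : ENNReal.ofReal l * volume (Metric.closedBall (cc 1) (ρ 1)) ≠ ⊤ :=
        ENNReal.mul_ne_top ENNReal.ofReal_ne_top (vol_cb_ne_top _ (hρpos 1 zero_le_one).le)
      have := ENNReal.toReal_mono hfin h1''
      rw [ENNReal.toReal_mul, ENNReal.toReal_ofReal hl.le] at this
      exact this
    rw [hφ, div_le_iff₀ (hgpos 1 zero_le_one)]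
    exact h1'
  have hivt := intermediate_value_Icc' zero_le_one hφcont
  have hlmem : l ∈ Icc (φ 1) (φ 0) := ⟨hφ1, hφ0⟩
  obtain ⟨t, ht, hφt⟩ := hivt hlmem
  refine ⟨cc t, ρ t, hρr t ht.1, ?_, hbig t ht.1 ht.2, ?_⟩
  · have := hmono 0 t le_rfl ht.1
    rwa [hcc0, hρ0] at this
  · have hft : f t = l * g t := by
      have := hφt
      simp only [hφ] at this
      field_simp [(hgpos t ht.1).ne'] at this
      linarith [this]
    rw [← ENNReal.toReal_eq_toReal_iff' (hEfin t ht.1)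
      (ENNReal.mul_ne_top ENNReal.ofReal_ne_top (vol_cb_ne_top _ (hρpos t ht.1).le))]
    rw [ENNReal.toReal_mul, ENNReal.toReal_ofReal hl.le]
    exact hft

end Stmt0Aux

open Stmt0Aux

/-- Theorem 1 of the paper: improved restricted reverse weak-type bound. -/
theorem stmt0 (n : ℕ) :
    ∃ B : ℝ, 0 < B ∧
      ∀ la : ℝ, la ∈ Set.Ioo (0 : ℝ) 1 →
      ∀ Q : Set (Fin n → ℝ), IsCube Q →
      ∀ E : Set (Fin n → ℝ), MeasurableSet E → E ⊆ Q →
        0 < volume E → volume E ≤ ENNReal.ofReal la * volume Q →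
        ENNReal.ofReal (1 + (1 - la) / (B * la)) * volume E ≤
          volume {x ∈ Q | ENNReal.ofReal la < maximalOn Q (E.indicator 1) x} := by
  classical
  refine ⟨2 * 4 ^ n, by positivity, ?_⟩
  rintro la ⟨hla0, hla1⟩ Q hQ E hEm hEQ hE0 hEla
  -- the case `n = 0` is vacuous
  rcases Nat.eq_zero_or_pos n with hn0 | hn
  · exfalso
    subst hn0
    haveI : Subsingleton (Fin 0 → ℝ) := ⟨fun f g => funext fun i => i.elim0⟩
    obtain ⟨x, hx⟩ := nonempty_of_measure_ne_zero hE0.ne'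
    have hEuniv : E = Set.univ := Set.eq_univ_of_forall fun y => (Subsingleton.elim x y) ▸ hx
    have hQuniv : Q = Set.univ := Set.eq_univ_of_forall fun y =>
      (Subsingleton.elim x y) ▸ hEQ hx
    obtain ⟨a, h, hh, hQ'⟩ := hQ
    have h1 : volume (Q : Set (Fin 0 → ℝ)) = 1 := by
      rw [hQ', Real.volume_Icc_pi]
      simp
    rw [hEuniv, ← hQuniv, h1, mul_one] at hEla
    exact lt_irrefl 1 (hEla.trans_lt (ENNReal.ofReal_lt_one.2 hla1))
  obtain ⟨c₀, r₀, hr₀, rfl⟩ := isCube_iff hQ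
  set la' : ℝ := 2 * la / (1 + la) with hla'def
  have hla'0 : 0 < la' := by positivity
  have hlala' : la < la' := by
    rw [hla'def, lt_div_iff₀ (by linarith)]
    nlinarith
  have hla'1 : la' < 1 := by
    rw [hla'def, div_lt_one (by linarith)]
    linarith
  have hQfin : volume (Metric.closedBall c₀ r₀) ≠ ⊤ := vol_cb_ne_top c₀ hr₀.le
  have hQpos : 0 < volume (Metric.closedBall c₀ r₀) := vol_cb_pos c₀ hr₀
  have hEfin : volume E ≠ ⊤ :=
    ne_top_of_le_ne_top hQfin (measure_mono hEQ)
  have hEQvol : volume (E ∩ Metric.closedBall c₀ r₀)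
      ≤ ENNReal.ofReal la' * volume (Metric.closedBall c₀ r₀) := by
    rw [Set.inter_eq_self_of_subset_left hEQ]
    exact hEla.trans (mul_le_mul_left (ENNReal.ofReal_le_ofReal hlala'.le) _)
  -- density points
  have hdens := Besicovitch.ae_tendsto_measure_inter_div_of_measurableSet volume hEm
  set D : Set (Fin n → ℝ) := {x | Tendsto
      (fun r => volume (E ∩ Metric.closedBall x r) / volume (Metric.closedBall x r))
      (𝓝[>] 0) (𝓝 1)} with hD
  have hED : ∀ᵐ x ∂(volume : Measure (Fin n → ℝ)), x ∈ E → x ∈ D := by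
    filter_upwards [hdens] with x hx hxE
    simp only [hD, Set.mem_setOf_eq]
    rwa [Set.indicator_of_mem hxE, Pi.one_apply] at hx
  have hnullD : volume (E \ D) = 0 := by
    refine measure_mono_null (fun x hx => ?_) hED
    exact fun h => hx.2 (h hx.1)
  have hsph : volume (Metric.closedBall c₀ r₀ \ Metric.ball c₀ r₀) = 0 := by
    have hb : volume (Metric.ball c₀ r₀) = ENNReal.ofReal (2 * r₀) ^ n := by
      rw [ball_pi _ hr₀]
      have : ∀ i : Fin n, Metric.ball (c₀ i) r₀ = Set.Ioo (c₀ i - r₀) (c₀ i + r₀) :=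
        fun i => Real.ball_eq_Ioo _ _
      rw [show (Set.pi Set.univ fun i => Metric.ball (c₀ i) r₀)
          = Set.pi Set.univ fun i => Set.Ioo (c₀ i - r₀) (c₀ i + r₀) from
        Set.pi_congr rfl fun i _ => this i]
      rw [Real.volume_pi_Ioo]
      simp only [show ∀ x : ℝ, x + r₀ - (x - r₀) = 2 * r₀ from fun x => by ring]
      simp [Finset.prod_const]
    rw [measure_diff Metric.ball_subset_closedBall measurableSet_ball.nullMeasurableSet
      (by rw [hb]; exact ENNReal.pow_ne_top ENNReal.ofReal_ne_top)]
    rw [hb, vol_cb c₀ hr₀.le, tsub_self]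
  set E'' : Set (Fin n → ℝ) := (E ∩ D) ∩ Metric.ball c₀ r₀ with hE''
  have hE''E : E'' ⊆ E := fun x hx => hx.1.1
  have hnullE'' : volume (E \ E'') = 0 := by
    refine measure_mono_null (fun x hx => ?_) (measure_union_null hnullD hsph)
    rcases Classical.em (x ∈ D) with hD' | hD'
    · rcases Classical.em (x ∈ Metric.ball c₀ r₀) with hB | hB
      · exact absurd ⟨⟨hx.1, hD'⟩, hB⟩ hx.2
      · exact Or.inr ⟨hEQ hx.1, hB⟩
    · exact Or.inl ⟨hx.1, hD'⟩
  have hvolE'' : volume E'' = volume E := by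
    refine le_antisymm (measure_mono hE''E) ?_
    calc volume E ≤ volume (E'' ∪ (E \ E'')) :=
          measure_mono (fun x hx => by
            rcases Classical.em (x ∈ E'') with h | h
            · exact Or.inl h
            · exact Or.inr ⟨hx, h⟩)
      _ ≤ volume E'' + volume (E \ E'') := measure_union_le _ _
      _ = volume E'' := by rw [hnullE'', add_zero]
  -- for every point of `E''` there is an admissible ball
  have hadm : ∀ x ∈ E'', ∃ c : Fin n → ℝ, ∃ ρ : ℝ, 0 < ρ ∧ x ∈ Metric.closedBall c ρ ∧
      Metric.closedBall c ρ ⊆ Metric.closedBall c₀ r₀ ∧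
      ENNReal.ofReal la' * volume (Metric.closedBall c ρ)
        ≤ volume (E ∩ Metric.closedBall c ρ) := by
    intro x hx
    obtain ⟨⟨hxE, hxD⟩, hxB⟩ := hx
    have hxD' : Tendsto
        (fun r => volume (E ∩ Metric.closedBall x r) / volume (Metric.closedBall x r))
        (𝓝[>] 0) (𝓝 1) := hxD
    have hev1 : ∀ᶠ r in 𝓝[>] (0:ℝ), ENNReal.ofReal la' <
        volume (E ∩ Metric.closedBall x r) / volume (Metric.closedBall x r) :=
      hxD' (eventually_gt_nhds (ENNReal.ofReal_lt_one.2 hla'1))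
    have hδ : 0 < r₀ - dist x c₀ := by
      rw [Metric.mem_ball] at hxB
      linarith
    have hev2 : ∀ᶠ r in 𝓝[>] (0:ℝ), r ∈ Set.Ioo 0 (r₀ - dist x c₀) :=
      Ioo_mem_nhdsGT_of_mem ⟨le_refl _, hδ⟩
    obtain ⟨r, hr1, hr2⟩ := (hev1.and hev2).exists
    refine ⟨x, r, hr2.1, Metric.mem_closedBall_self hr2.1.le, ?_, ?_⟩
    · exact Metric.closedBall_subset_closedBall' (by linarith [hr2.2])
    · have hne : volume (Metric.closedBall x r) ≠ 0 := (vol_cb_pos x hr2.1).ne'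
      have hfin : volume (Metric.closedBall x r) ≠ ⊤ := vol_cb_ne_top x hr2.1.le
      have := (ENNReal.lt_div_iff_mul_lt (Or.inl hne) (Or.inl hfin)).1 hr1
      exact this.le
  -- choose a near-maximal ball with average exactly `la'`
  have hmax : ∀ x ∈ E'', ∃ c : Fin n → ℝ, ∃ ρ : ℝ, 0 < ρ ∧ x ∈ Metric.closedBall c ρ ∧
      Metric.closedBall c ρ ⊆ Metric.closedBall c₀ r₀ ∧
      volume (E ∩ Metric.closedBall c ρ)
        = ENNReal.ofReal la' * volume (Metric.closedBall c ρ) ∧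
      ∀ c' : Fin n → ℝ, ∀ ρ' : ℝ, x ∈ Metric.closedBall c' ρ' →
        Metric.closedBall c' ρ' ⊆ Metric.closedBall c₀ r₀ →
        ENNReal.ofReal la' * volume (Metric.closedBall c' ρ')
          ≤ volume (E ∩ Metric.closedBall c' ρ') → ρ' ≤ 2 * ρ := by
    intro x hx
    obtain ⟨c, r, hr, hxr, hrQ, hrav⟩ := hadm x hx
    set S : Set ℝ := {ρ : ℝ | ∃ c : Fin n → ℝ, 0 < ρ ∧ x ∈ Metric.closedBall c ρ ∧
      Metric.closedBall c ρ ⊆ Metric.closedBall c₀ r₀ ∧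
      ENNReal.ofReal la' * volume (Metric.closedBall c ρ)
        ≤ volume (E ∩ Metric.closedBall c ρ)} with hSdef
    have hrS : r ∈ S := ⟨c, hr, hxr, hrQ, hrav⟩
    have hbdd : BddAbove S := by
      refine ⟨r₀, fun ρ hρ => ?_⟩
      obtain ⟨cρ, hρ0, _, hρQ, _⟩ := hρ
      exact radius_le hn hρ0.le hρQ
    have hsx : 0 < sSup S := hr.trans_le (le_csSup hbdd hrS)
    obtain ⟨ρ', hρ'S, hρ'big⟩ : ∃ ρ' ∈ S, sSup S / 2 < ρ' :=
      exists_lt_of_lt_csSup ⟨r, hrS⟩ (by linarith)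
    obtain ⟨c', hρ'0, hxρ', hρ'Q, hρ'av⟩ := hρ'S
    obtain ⟨c'', ρ'', hge, hsub1, hsub2, heq⟩ :=
      exists_avg_eq hn hEm c₀ c' hρ'0 hla'0 hρ'Q hρ'av hEQvol
    have hρ''S : ρ'' ∈ S := ⟨c'', hρ'0.trans_le hge, hsub1 hxρ', hsub2, heq.ge⟩
    have hρ''sx : ρ'' ≤ sSup S := le_csSup hbdd hρ''S
    refine ⟨c'', ρ'', hρ'0.trans_le hge, hsub1 hxρ', hsub2, heq, ?_⟩
    intro c3 ρ3 h3x h3Q h3av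
    rcases le_or_gt ρ3 0 with h3 | h3
    · linarith [hρ'0.trans_le hge]
    · have h3S : ρ3 ∈ S := ⟨c3, h3, h3x, h3Q, h3av⟩
      have := le_csSup hbdd h3S
      linarith
  choose! cen rad hrad hmem hsubQ havg hmaximal using hmax
  -- Vitali covering lemma
  obtain ⟨u, huE, hdisj, hcov⟩ :=
    Vitali.exists_disjoint_subfamily_covering_enlargement_closedBall E'' cen rad r₀
      (fun a ha => radius_le hn (hrad a ha).le (hsubQ a ha)) 4 (by norm_num)
  have hucnt : u.Countable := by
    have hcnt := MeasureTheory.Measure.countable_meas_pos_of_disjoint_iUnion₀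
      (μ := (volume : Measure (Fin n → ℝ))) (ι := u)
      (As := fun b => Metric.closedBall (cen b.1) (rad b.1))
      (fun b => measurableSet_closedBall.nullMeasurableSet)
      (fun i j hij => ((hdisj i.2 j.2 (fun h => hij (Subtype.ext h)))).aedisjoint)
    have huniv : {i : u | 0 < volume (Metric.closedBall (cen i.1) (rad i.1))} = Set.univ :=
      Set.eq_univ_of_forall fun b => vol_cb_pos _ (hrad b.1 (huE b.2))
    rw [huniv, Set.countable_univ_iff] at hcnt
    exact Set.countable_coe_iff.1 hcnt
  set W : Set (Fin n → ℝ) := ⋃ b ∈ u, Metric.closedBall (cen b) (rad b) with hW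
  have hWmeas : MeasurableSet W :=
    MeasurableSet.biUnion hucnt fun b _ => measurableSet_closedBall
  have hWQ : W ⊆ Metric.closedBall c₀ r₀ :=
    Set.iUnion₂_subset fun b hb => hsubQ b (huE hb)
  have hWvol : volume W = ∑' b : u, volume (Metric.closedBall (cen b.1) (rad b.1)) :=
    measure_biUnion hucnt hdisj fun b _ => measurableSet_closedBall
  -- the covering estimate
  have hper : ∀ b ∈ u, volume (E ∩ (Metric.closedBall (cen b) (4 * rad b)
      ∩ Metric.closedBall c₀ r₀)) ≤ ENNReal.ofReal la' *
      (ENNReal.ofReal (4 ^ n) * volume (Metric.closedBall (cen b) (rad b))) := by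
    intro b hb
    have hbE : b ∈ E'' := huE hb
    have hrb : 0 < rad b := hrad b hbE
    have hvol4 : ENNReal.ofReal (2 * (4 * rad b)) ^ n
        = ENNReal.ofReal (4 ^ n) * ENNReal.ofReal (2 * rad b) ^ n := by
      rw [show 2 * (4 * rad b) = 4 * (2 * rad b) by ring,
        ENNReal.ofReal_mul (by norm_num), mul_pow, ← ENNReal.ofReal_pow (by norm_num)]
    rcases le_or_gt (4 * rad b) r₀ with h4 | h4
    · obtain ⟨c', hS1, hS2, hS3⟩ := exists_intermediate_ball c₀ (cen b)
        hrb.le (by linarith) h4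
      have hbQ : b ∈ Metric.closedBall c₀ r₀ := Metric.ball_subset_closedBall hbE.2
      have hbS : b ∈ Metric.closedBall c' (4 * rad b) := hS3 ⟨hmem b hbE, hbQ⟩
      have havgS : ¬ (ENNReal.ofReal la' * volume (Metric.closedBall c' (4 * rad b))
          ≤ volume (E ∩ Metric.closedBall c' (4 * rad b))) := by
        intro hcon
        have := hmaximal b hbE c' (4 * rad b) hbS hS1 hcon
        linarith
      push_neg at havgS
      calc volume (E ∩ (Metric.closedBall (cen b) (4 * rad b) ∩ Metric.closedBall c₀ r₀))
          ≤ volume (E ∩ Metric.closedBall c' (4 * rad b)) :=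
            measure_mono (Set.inter_subset_inter Set.Subset.rfl hS2)
        _ ≤ ENNReal.ofReal la' * volume (Metric.closedBall c' (4 * rad b)) := havgS.le
        _ = ENNReal.ofReal la' *
            (ENNReal.ofReal (4 ^ n) * volume (Metric.closedBall (cen b) (rad b))) := by
            rw [vol_cb c' (by linarith), vol_cb (cen b) hrb.le, hvol4]
    · calc volume (E ∩ (Metric.closedBall (cen b) (4 * rad b) ∩ Metric.closedBall c₀ r₀))
          ≤ volume (E ∩ Metric.closedBall c₀ r₀) :=
            measure_mono (Set.inter_subset_inter Set.Subset.rfl Set.inter_subset_right)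
        _ ≤ ENNReal.ofReal la' * volume (Metric.closedBall c₀ r₀) := hEQvol
        _ ≤ ENNReal.ofReal la' *
            (ENNReal.ofReal (4 ^ n) * volume (Metric.closedBall (cen b) (rad b))) := by
            refine mul_le_mul_right ?_ _
            rw [vol_cb c₀ hr₀.le, vol_cb (cen b) hrb.le, ← hvol4]
            exact pow_le_pow_left' (ENNReal.ofReal_le_ofReal (by linarith)) n
  -- summing up : `volume E` is controlled by `volume W`
  have hD1 : volume E ≤ ENNReal.ofReal la' * (ENNReal.ofReal (4 ^ n) * volume W) := by
    have hcover : E'' ⊆ ⋃ b ∈ u, (E ∩ (Metric.closedBall (cen b) (4 * rad b)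
        ∩ Metric.closedBall c₀ r₀)) := by
      intro a ha
      obtain ⟨b, hbu, hsub⟩ := hcov a ha
      refine Set.mem_biUnion hbu ⟨hE''E ha, hsub (hmem a ha), Metric.ball_subset_closedBall ha.2⟩
    calc volume E = volume E'' := hvolE''.symm
      _ ≤ volume (⋃ b ∈ u, (E ∩ (Metric.closedBall (cen b) (4 * rad b)
            ∩ Metric.closedBall c₀ r₀))) := measure_mono hcover
      _ ≤ ∑' b : u, volume (E ∩ (Metric.closedBall (cen b.1) (4 * rad b.1)
            ∩ Metric.closedBall c₀ r₀)) := measure_biUnion_le volume hucnt _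
      _ ≤ ∑' b : u, ENNReal.ofReal la' *
            (ENNReal.ofReal (4 ^ n) * volume (Metric.closedBall (cen b.1) (rad b.1))) :=
          ENNReal.tsum_le_tsum fun b => hper b.1 b.2
      _ = ENNReal.ofReal la' * (ENNReal.ofReal (4 ^ n) * volume W) := by
          rw [hWvol]
          simp_rw [← mul_assoc]
          rw [ENNReal.tsum_mul_left]
  -- the gain estimate on each ball
  have hgain : ∀ b ∈ u, (1 - ENNReal.ofReal la') * volume (Metric.closedBall (cen b) (rad b))
      ≤ volume (Metric.closedBall (cen b) (rad b) \ E) := by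
    intro b hb
    have hbE := huE hb
    have hfin : volume (Metric.closedBall (cen b) (rad b)) ≠ ⊤ :=
      vol_cb_ne_top _ (hrad b hbE).le
    have hsplit : volume (Metric.closedBall (cen b) (rad b))
        ≤ volume (Metric.closedBall (cen b) (rad b) \ E)
          + ENNReal.ofReal la' * volume (Metric.closedBall (cen b) (rad b)) := by
      calc volume (Metric.closedBall (cen b) (rad b))
          ≤ volume ((Metric.closedBall (cen b) (rad b) \ E)
              ∪ (E ∩ Metric.closedBall (cen b) (rad b))) := measure_mono (fun x hx => by
            rcases Classical.em (x ∈ E) with h | h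
            · exact Or.inr ⟨h, hx⟩
            · exact Or.inl ⟨hx, h⟩)
        _ ≤ volume (Metric.closedBall (cen b) (rad b) \ E)
              + volume (E ∩ Metric.closedBall (cen b) (rad b)) := measure_union_le _ _
        _ = volume (Metric.closedBall (cen b) (rad b) \ E)
              + ENNReal.ofReal la' * volume (Metric.closedBall (cen b) (rad b)) := by
            rw [havg b hbE]
    rw [ENNReal.sub_mul (fun _ _ => hfin), one_mul]
    exact tsub_le_iff_right.2 hsplit
  -- the superlevel set contains `E''` and `W`
  set G : Set (Fin n → ℝ) := {x ∈ Metric.closedBall c₀ r₀ |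
      ENNReal.ofReal la < maximalOn (Metric.closedBall c₀ r₀) (E.indicator 1) x} with hG
  have hGmem : ∀ x c : Fin n → ℝ, ∀ ρ : ℝ, 0 < ρ → x ∈ Metric.closedBall c ρ →
      Metric.closedBall c ρ ⊆ Metric.closedBall c₀ r₀ →
      volume (E ∩ Metric.closedBall c ρ)
        = ENNReal.ofReal la' * volume (Metric.closedBall c ρ) →
      x ∈ G := by
    intro x c ρ hρ hx hsub havg'
    refine ⟨hsub hx, ?_⟩
    refine lt_maximalOn hEm (isCube_cb c hρ) hsub hx ?_
    rw [havg', mul_div_assoc,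
      ENNReal.div_self (vol_cb_pos c hρ).ne' (vol_cb_ne_top c hρ.le), mul_one]
    exact (ENNReal.ofReal_lt_ofReal_iff_of_nonneg hla0.le).2 hlala'
  have hWG : W ⊆ G := Set.iUnion₂_subset fun b hb x hx =>
    hGmem x (cen b) (rad b) (hrad b (huE hb)) hx (hsubQ b (huE hb)) (havg b (huE hb))
  have hE''G : E'' ⊆ G := fun x hx =>
    hGmem x (cen x) (rad x) (hrad x hx) (hmem x hx) (hsubQ x hx) (havg x hx)
  -- putting everything together
  have hkey : volume E + (1 - ENNReal.ofReal la') * volume W ≤ volume G := by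
    have hsubG : E'' ∪ (W \ E) ⊆ G := Set.union_subset hE''G (Set.diff_subset.trans hWG)
    have hdisj2 : Disjoint E'' (W \ E) :=
      Set.disjoint_left.2 fun x hx hx2 => hx2.2 (hE''E hx)
    have hWEvol : (1 - ENNReal.ofReal la') * volume W ≤ volume (W \ E) := by
      have hWdiff : W \ E = ⋃ b ∈ u, (Metric.closedBall (cen b) (rad b) \ E) := by
        rw [hW]
        simp only [Set.iUnion_diff]
      rw [hWdiff, measure_biUnion hucnt (hdisj.mono fun b => Set.diff_subset)
        (fun b _ => measurableSet_closedBall.diff hEm), hWvol, ← ENNReal.tsum_mul_left]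
      exact ENNReal.tsum_le_tsum fun b => hgain b.1 b.2
    calc volume E + (1 - ENNReal.ofReal la') * volume W
        = volume E'' + (1 - ENNReal.ofReal la') * volume W := by rw [hvolE'']
      _ ≤ volume E'' + volume (W \ E) := add_le_add_right hWEvol _
      _ = volume (E'' ∪ (W \ E)) := (measure_union hdisj2 (hWmeas.diff hEm)).symm
      _ ≤ volume G := measure_mono hsubG
  -- the final arithmetic
  have hc0 : 0 ≤ (1 - la) / (2 * 4 ^ n * la) := by
    apply div_nonneg (by linarith)
    positivity
  have harith : ENNReal.ofReal (1 + (1 - la) / (2 * 4 ^ n * la)) * volume E ≤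
      volume E + (1 - ENNReal.ofReal la') * volume W := by
    rw [ENNReal.ofReal_add (by norm_num) hc0, ENNReal.ofReal_one, add_mul, one_mul]
    refine add_le_add_right ?_ _
    calc ENNReal.ofReal ((1 - la) / (2 * 4 ^ n * la)) * volume E
        ≤ ENNReal.ofReal ((1 - la) / (2 * 4 ^ n * la)) *
          (ENNReal.ofReal la' * (ENNReal.ofReal (4 ^ n) * volume W)) := mul_le_mul_right hD1 _
      _ = ENNReal.ofReal ((1 - la) / (2 * 4 ^ n * la) * (la' * 4 ^ n)) * volume W := by
          rw [ENNReal.ofReal_mul hc0, ENNReal.ofReal_mul hla'0.le]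
          ring
      _ = ENNReal.ofReal (1 - la') * volume W := by
          congr 2
          rw [hla'def]
          field_simp
          ring
      _ = (1 - ENNReal.ofReal la') * volume W := by
          rw [ENNReal.ofReal_sub 1 hla'0.le, ENNReal.ofReal_one]
  exact harith.trans hkey
end

section
/- Let λ ∈ (0,1), B ≥ 1, let Q ⊂ ℝⁿ be a cube and E ⊂ Q a measurable set of positive measure. Suppose {R_j} is a countable family of cubes contained in Q such that (i) |R_j ∩ E| = λ|R_j| for every j, (ii) every point of Q belongs to at most B of the cubes R_j, and (iii) almost every point of E belongs to ∪_j R_j. Then |{x ∈ Q : M_Q χ_E(x) ≥ λ}| ≥ (1 + (1-λ)/(Bλ)) |E|. -/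
open MeasureTheory Set Filter
open scoped ENNReal Topology

lemma IsCube.measurableSet' {n : ℕ} {Q : Set (Fin n → ℝ)} (h : IsCube Q) :
    MeasurableSet Q := by
  obtain ⟨a, s, hs, rfl⟩ := h; exact measurableSet_Icc

lemma IsCube.volume_pos' {n : ℕ} {Q : Set (Fin n → ℝ)} (h : IsCube Q) :
    0 < volume Q := by
  obtain ⟨a, s, hs, rfl⟩ := h
  rw [Real.volume_Icc_pi]
  simp only [add_sub_cancel_left]
  rw [Finset.prod_const]
  exact ENNReal.pow_pos (ENNReal.ofReal_pos.mpr hs) _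

lemma IsCube.volume_lt_top' {n : ℕ} {Q : Set (Fin n → ℝ)} (h : IsCube Q) :
    volume Q < ∞ := by
  obtain ⟨a, s, hs, rfl⟩ := h
  rw [Real.volume_Icc_pi]
  simp only [add_sub_cancel_left]
  rw [Finset.prod_const]
  exact ENNReal.pow_lt_top ENNReal.ofReal_lt_top

/-- the covering-family argument behind Theorem 1. -/
theorem stmt1 (n : ℕ) (la B : ℝ) (hla : la ∈ Set.Ioo (0 : ℝ) 1) (hB : 1 ≤ B)
    (Q : Set (Fin n → ℝ)) (hQ : IsCube Q)
    (E : Set (Fin n → ℝ)) (hE : MeasurableSet E) (hEQ : E ⊆ Q) (hE0 : 0 < volume E)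
    (ι : Type) (hι : Countable ι) (R : ι → Set (Fin n → ℝ))
    (hcube : ∀ j, IsCube (R j)) (hsub : ∀ j, R j ⊆ Q)
    (h1 : ∀ j, volume (R j ∩ E) = ENNReal.ofReal la * volume (R j))
    (h2 : ∀ x ∈ Q, ∑' j : ι, (R j).indicator (1 : (Fin n → ℝ) → ℝ≥0∞) x ≤ ENNReal.ofReal B)
    (h3 : volume (E \ ⋃ j, R j) = 0) :
    ENNReal.ofReal (1 + (1 - la) / (B * la)) * volume E ≤
      volume {x ∈ Q | ENNReal.ofReal la ≤ maximalOn Q (E.indicator 1) x} := by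
  obtain ⟨hla0, hla1⟩ := hla
  have hB0 : (0 : ℝ) < B := lt_of_lt_of_le one_pos hB
  set U : Set (Fin n → ℝ) := ⋃ j, R j with hU
  have hUmeas : MeasurableSet U := MeasurableSet.iUnion fun j => (hcube j).measurableSet'
  have hUQ : U ⊆ Q := iUnion_subset hsub
  set G : Set (Fin n → ℝ) :=
    {x ∈ Q | ENNReal.ofReal la ≤ maximalOn Q (E.indicator 1) x} with hG
  -- Each R j is contained in G
  have hRG : ∀ j, R j ⊆ G := by
    intro j x hx
    have hvpos : volume (R j) ≠ 0 := (hcube j).volume_pos'.ne'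
    have hvtop : volume (R j) ≠ ∞ := (hcube j).volume_lt_top'.ne
    refine ⟨hsub j hx, ?_⟩
    have hint : ∫⁻ y in R j, E.indicator 1 y = volume (E ∩ R j) := by
      rw [lintegral_indicator hE]
      simp only [Pi.one_apply, setLIntegral_one, Measure.restrict_apply hE]
    have : (∫⁻ y in R j, E.indicator 1 y) / volume (R j) = ENNReal.ofReal la := by
      rw [hint, inter_comm, h1 j, mul_div_assoc,
        ENNReal.div_self hvpos hvtop, mul_one]
    calc ENNReal.ofReal la = (∫⁻ y in R j, E.indicator 1 y) / volume (R j) := this.symm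
      _ ≤ maximalOn Q (E.indicator 1) x :=
        le_iSup_of_le (R j) <| le_iSup_of_le (hcube j) <| le_iSup_of_le (hsub j) <|
          le_iSup_of_le hx le_rfl
  have hUG : U ⊆ G := iUnion_subset hRG
  -- volume (U ∩ E) = volume E
  have hUE : volume (U ∩ E) = volume E := by
    have := measure_inter_add_diff (μ := volume) E hUmeas
    rw [h3, add_zero] at this
    rw [inter_comm, this]
  -- each R j splits
  have hsplit : ∀ j, volume (R j \ E) = ENNReal.ofReal ((1 - la) / la) * volume (R j ∩ E) := by
    intro j
    have hvtop : volume (R j) ≠ ∞ := (hcube j).volume_lt_top'.ne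
    have hd : volume (R j ∩ E) + volume (R j \ E) = volume (R j) :=
      measure_inter_add_diff (μ := volume) (R j) hE
    have key : volume (R j \ E) = ENNReal.ofReal (1 - la) * volume (R j) := by
      have h' : ENNReal.ofReal la * volume (R j) + volume (R j \ E)
          = ENNReal.ofReal la * volume (R j) + ENNReal.ofReal (1 - la) * volume (R j) := by
        have hs : ENNReal.ofReal la * volume (R j) + ENNReal.ofReal (1 - la) * volume (R j)
            = volume (R j) := by
          rw [← add_mul, ← ENNReal.ofReal_add hla0.le (by linarith)]
          norm_num
        rw [hs]
        conv_rhs => rw [← hd, h1 j]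
      have hfin : ENNReal.ofReal la * volume (R j) ≠ ∞ :=
        ENNReal.mul_ne_top ENNReal.ofReal_ne_top hvtop
      exact (ENNReal.add_right_inj hfin).mp h'
    rw [key, h1 j, ← mul_assoc,
      ← ENNReal.ofReal_mul (div_nonneg (by linarith) hla0.le)]
    rw [div_mul_cancel₀ _ hla0.ne']
  -- sum bound: ∑ |R j \ E| ≤ B * |U \ E|
  have hsum_le : ∑' j, volume (R j \ E) ≤ ENNReal.ofReal B * volume (U \ E) := by
    have heq : ∀ j, volume (R j \ E)
        = ∫⁻ x in U \ E, (R j).indicator (1 : (Fin n → ℝ) → ℝ≥0∞) x := by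
      intro j
      rw [lintegral_indicator (hcube j).measurableSet']
      simp only [Pi.one_apply, setLIntegral_one,
        Measure.restrict_apply (hcube j).measurableSet']
      congr 1
      rw [← inter_diff_assoc, inter_eq_self_of_subset_left (subset_iUnion R j)]
    calc ∑' j, volume (R j \ E)
        = ∑' j, ∫⁻ x in U \ E, (R j).indicator (1 : (Fin n → ℝ) → ℝ≥0∞) x := by
          simp only [heq]
      _ = ∫⁻ x in U \ E, ∑' j, (R j).indicator (1 : (Fin n → ℝ) → ℝ≥0∞) x := by
          rw [lintegral_tsum fun j =>
            ((measurable_one.indicator (hcube j).measurableSet').aemeasurable)]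
      _ ≤ ∫⁻ _ in U \ E, ENNReal.ofReal B :=
          setLIntegral_mono' (hUmeas.diff hE) fun x hx => h2 x (hUQ hx.1)
      _ = ENNReal.ofReal B * volume (U \ E) := by
          rw [setLIntegral_const]
  -- |E| ≤ ∑ |R j ∩ E|
  have hE_le : volume E ≤ ∑' j, volume (R j ∩ E) := by
    calc volume E = volume (U ∩ E) := hUE.symm
      _ = volume (⋃ j, R j ∩ E) := by rw [iUnion_inter]
      _ ≤ ∑' j, volume (R j ∩ E) := measure_iUnion_le _
  -- main diff bound
  have hdiff : ENNReal.ofReal ((1 - la) / (B * la)) * volume E ≤ volume (U \ E) := by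
    have step1 : ENNReal.ofReal ((1 - la) / la) * volume E
        ≤ ENNReal.ofReal B * volume (U \ E) := by
      calc ENNReal.ofReal ((1 - la) / la) * volume E
          ≤ ENNReal.ofReal ((1 - la) / la) * ∑' j, volume (R j ∩ E) :=
            mul_le_mul_right hE_le _
        _ = ∑' j, ENNReal.ofReal ((1 - la) / la) * volume (R j ∩ E) :=
            ENNReal.tsum_mul_left.symm
        _ = ∑' j, volume (R j \ E) := by simp only [hsplit]
        _ ≤ ENNReal.ofReal B * volume (U \ E) := hsum_le
    have hBinv : ENNReal.ofReal B⁻¹ * ENNReal.ofReal B = 1 := by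
      rw [← ENNReal.ofReal_mul (inv_nonneg.mpr hB0.le), inv_mul_cancel₀ hB0.ne']
      simp
    calc ENNReal.ofReal ((1 - la) / (B * la)) * volume E
        = ENNReal.ofReal B⁻¹ * (ENNReal.ofReal ((1 - la) / la) * volume E) := by
          rw [← mul_assoc, ← ENNReal.ofReal_mul (inv_nonneg.mpr hB0.le)]
          congr 2
          rw [inv_mul_eq_div, div_div, mul_comm B la]
      _ ≤ ENNReal.ofReal B⁻¹ * (ENNReal.ofReal B * volume (U \ E)) :=
          mul_le_mul_right step1 _
      _ = volume (U \ E) := by rw [← mul_assoc, hBinv, one_mul]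
  -- conclude
  have hpos : (0 : ℝ) ≤ (1 - la) / (B * la) := div_nonneg (by linarith) (by positivity)
  calc ENNReal.ofReal (1 + (1 - la) / (B * la)) * volume E
      = volume E + ENNReal.ofReal ((1 - la) / (B * la)) * volume E := by
        rw [ENNReal.ofReal_add zero_le_one hpos, add_mul, ENNReal.ofReal_one, one_mul]
    _ ≤ volume (U ∩ E) + volume (U \ E) := add_le_add hUE.ge hdiff
    _ = volume U := measure_inter_add_diff (μ := volume) U hE
    _ ≤ volume G := measure_mono hUG
end

section
/- There exists a constant B_n depending only on n (the Besicovitch covering constant) such that the following holds: for every λ ∈ (0,1), every cube Q ⊂ ℝⁿ, and every measurable set E ⊂ Q with |E| ≤ λ|Q|, there exists a countable family {R_j} of cubes contained in Q such that (i) |R_j ∩ E| = λ|R_j| for every j; (ii) every point of Q belongs to at most B_n of the cubes R_j; and (iii) every Lebesgue density point of E belongs to ∪_j R_j. -/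
open MeasureTheory Set Filter
open scoped ENNReal Topology

noncomputable section
namespace Stmt2Aux
variable {n : ℕ}

/-- lower corner of the clamped cube of side `s` through `x` inside `Icc a (a+h)`. -/
def corner (a : Fin n → ℝ) (h : ℝ) (x : Fin n → ℝ) (s : ℝ) : Fin n → ℝ :=
  fun i => max (a i) (min (x i - s / 2) (a i + h - s))

def kube (a : Fin n → ℝ) (h : ℝ) (x : Fin n → ℝ) (s : ℝ) : Set (Fin n → ℝ) :=
  Icc (corner a h x s) (fun i => corner a h x s i + s)

lemma corner_lip (a : Fin n → ℝ) (h : ℝ) (x : Fin n → ℝ) (s t : ℝ) (i : Fin n) :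
    |corner a h x s i - corner a h x t i| ≤ |s - t| := by
  unfold corner
  have h1 := abs_max_sub_max_le_max (a i) (min (x i - s / 2) (a i + h - s))
      (a i) (min (x i - t / 2) (a i + h - t))
  have h2 := abs_min_sub_min_le_max (x i - s / 2) (a i + h - s)
      (x i - t / 2) (a i + h - t)
  have h3 : |(x i - s / 2) - (x i - t / 2)| ≤ |s - t| := by
    rw [show (x i - s / 2) - (x i - t / 2) = -((s - t)/2) by ring, abs_neg, abs_div]
    have := abs_nonneg (s - t)
    simp only [abs_two]
    linarith
  have h4 : |(a i + h - s) - (a i + h - t)| = |s - t| := by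
    rw [show (a i + h - s) - (a i + h - t) = -(s - t) by ring, abs_neg]
  refine h1.trans ?_
  rw [sub_self, abs_zero]
  exact max_le (abs_nonneg _) (h2.trans (max_le h3 h4.le))

lemma corner_ge (a : Fin n → ℝ) (h : ℝ) (x : Fin n → ℝ) (s : ℝ) (i : Fin n) :
    a i ≤ corner a h x s i := le_max_left _ _

lemma corner_add_le (a : Fin n → ℝ) {h : ℝ} (x : Fin n → ℝ) {s : ℝ} (hs : s ≤ h) (i : Fin n) :
    corner a h x s i + s ≤ a i + h := by
  have : corner a h x s i ≤ a i + h - s :=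
    max_le (by linarith) (min_le_right _ _)
  linarith

lemma kube_subset (a : Fin n → ℝ) {h : ℝ} (x : Fin n → ℝ) {s : ℝ} (hs : s ≤ h) :
    kube a h x s ⊆ Icc a (fun i => a i + h) :=
  Icc_subset_Icc (fun i => corner_ge a h x s i) (fun i => corner_add_le a x hs i)

lemma corner_le_self {a : Fin n → ℝ} {h : ℝ} {x : Fin n → ℝ} {s : ℝ}
    (hx : x ∈ Icc a (fun i => a i + h)) (hs : 0 ≤ s) (i : Fin n) :
    corner a h x s i ≤ x i :=
  max_le (hx.1 i) ((min_le_left _ _).trans (by linarith))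

lemma mem_kube {a : Fin n → ℝ} {h : ℝ} {x : Fin n → ℝ} {s : ℝ}
    (hx : x ∈ Icc a (fun i => a i + h)) (hs : 0 ≤ s) :
    x ∈ kube a h x s := by
  constructor
  · exact fun i => corner_le_self hx hs i
  · intro i
    have h1 : min (x i - s / 2) (a i + h - s) ≤ corner a h x s i := le_max_right _ _
    have hx2 : x i ≤ a i + h := hx.2 i
    have h2 : x i - s ≤ min (x i - s / 2) (a i + h - s) := by
      refine le_min (by linarith) (by linarith)
    show x i ≤ corner a h x s i + s
    linarith [h2.trans h1]

lemma volume_kube (a : Fin n → ℝ) (h : ℝ) (x : Fin n → ℝ) (s : ℝ) :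
    volume (kube a h x s) = (ENNReal.ofReal s) ^ n := by
  rw [kube, Real.volume_Icc_pi]
  simp

lemma volume_Icc_cube (a : Fin n → ℝ) (h : ℝ) :
    volume (Icc a (fun i => a i + h)) = (ENNReal.ofReal h) ^ n := by
  rw [Real.volume_Icc_pi]
  simp

lemma kube_self (a : Fin n → ℝ) {h : ℝ} (x : Fin n → ℝ) :
    kube a h x h = Icc a (fun i => a i + h) := by
  unfold kube
  have : corner a h x h = a := by
    funext i
    exact max_eq_left ((min_le_right _ _).trans (by simp))
  rw [this]

lemma kube_isCube {a : Fin n → ℝ} {h : ℝ} {x : Fin n → ℝ} {s : ℝ} (hs : 0 < s) :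
    IsCube (kube a h x s) := ⟨corner a h x s, s, hs, rfl⟩

lemma kube_eq_closedBall (a : Fin n → ℝ) (h : ℝ) (x : Fin n → ℝ) {s : ℝ} (hs : 0 ≤ s) :
    kube a h x s =
      Metric.closedBall (fun i => corner a h x s i + s / 2) (s / 2) := by
  rw [closedBall_pi _ (by linarith : (0:ℝ) ≤ s / 2), kube, ← pi_univ_Icc]
  apply Set.pi_congr rfl
  intro i _
  rw [Real.closedBall_eq_Icc]
  congr 1 <;> ring

lemma kube_subset_closedBall {a : Fin n → ℝ} {h : ℝ} {x : Fin n → ℝ} {s : ℝ}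
    (hx : x ∈ Icc a (fun i => a i + h)) (hs : 0 < s) :
    kube a h x s ⊆ Metric.closedBall x s := by
  intro y hy
  have hxk := mem_kube hx hs.le
  rw [Metric.mem_closedBall, dist_pi_le_iff hs.le]
  intro i
  have l1 := hy.1 i
  have l2 := hy.2 i
  have l3 := hxk.1 i
  have l4 := hxk.2 i
  simp only at l1 l2 l3 l4
  rw [Real.dist_eq, abs_sub_le_iff]
  constructor <;> linarith


lemma kube_nzero (a : Fin 0 → ℝ) (h : ℝ) (x : Fin 0 → ℝ) (s : ℝ) :
    kube a h x s = univ :=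
  eq_univ_of_forall (fun y => ⟨fun i => i.elim0, fun i => i.elim0⟩)

lemma F_diff_le (a : Fin n → ℝ) (h : ℝ) (E : Set (Fin n → ℝ)) (x : Fin n → ℝ) (s t : ℝ) :
    (volume (E ∩ kube a h x s)).toReal - (volume (E ∩ kube a h x t)).toReal ≤
      (max (max s t) 0) ^ n - (max (min s t - 2 * |s - t|) 0) ^ n := by
  have hKs_fin : volume (kube a h x s) ≠ ∞ := by
    rw [volume_kube]; exact ENNReal.pow_ne_top ENNReal.ofReal_ne_top
  have hKt_fin : volume (kube a h x t) ≠ ∞ := by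
    rw [volume_kube]; exact ENNReal.pow_ne_top ENNReal.ofReal_ne_top
  have hEKs_fin : volume (E ∩ kube a h x s) ≠ ∞ :=
    fun hcon => hKs_fin (top_le_iff.1 (hcon ▸ measure_mono inter_subset_right))
  have hEKt_fin : volume (E ∩ kube a h x t) ≠ ∞ :=
    fun hcon => hKt_fin (top_le_iff.1 (hcon ▸ measure_mono inter_subset_right))
  rcases Nat.eq_zero_or_pos n with hn | hn
  · subst hn
    rw [kube_nzero, kube_nzero]
    simp
  have hn' : n ≠ 0 := hn.ne'
  have hFs_le : (volume (E ∩ kube a h x s)).toReal ≤ (max s 0) ^ n := by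
    have h1 : (volume (E ∩ kube a h x s)).toReal ≤ (volume (kube a h x s)).toReal :=
      ENNReal.toReal_mono hKs_fin (measure_mono inter_subset_right)
    refine h1.trans_eq ?_
    rw [volume_kube, ENNReal.toReal_pow, ENNReal.toReal_ofReal']
  have houter : (max s 0) ^ n ≤ (max (max s t) 0) ^ n :=
    pow_le_pow_left₀ (le_max_right _ _) (max_le_max (le_max_left s t) le_rfl) n
  set ℓ := min s t - 2 * |s - t| with hℓdef
  by_cases hℓ : ℓ ≤ 0
  · have : max ℓ 0 = 0 := max_eq_right hℓ
    rw [this, zero_pow hn']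
    have := ENNReal.toReal_nonneg (a := volume (E ∩ kube a h x t))
    linarith [hFs_le.trans houter]
  push_neg at hℓ
  -- common sub-box
  set m : Fin n → ℝ := fun i => max (corner a h x s i) (corner a h x t i) with hm
  set subBox : Set (Fin n → ℝ) := Icc m (fun i => m i + ℓ) with hsb
  have habs := abs_nonneg (s - t)
  have hsub1 : subBox ⊆ kube a h x s := by
    apply Icc_subset_Icc
    · exact fun i => le_max_left _ _
    · intro i
      have hl := corner_lip a h x s t i
      rw [abs_le] at hl
      have h1 : m i ≤ corner a h x s i + |s - t| := by
        apply max_le (by linarith)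
        linarith [hl.2]
      have h2 : ℓ ≤ s - 2 * |s - t| := by
        have : min s t ≤ s := min_le_left _ _
        simp only [hℓdef]; linarith
      show m i + ℓ ≤ corner a h x s i + s
      linarith
  have hsub2 : subBox ⊆ kube a h x t := by
    apply Icc_subset_Icc
    · exact fun i => le_max_right _ _
    · intro i
      have hl := corner_lip a h x s t i
      rw [abs_le] at hl
      have h1 : m i ≤ corner a h x t i + |s - t| := by
        apply max_le ?_ (by linarith)
        linarith [hl.1]
      have h2 : ℓ ≤ t - 2 * |s - t| := by
        have : min s t ≤ t := min_le_right _ _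
        simp only [hℓdef]; linarith
      show m i + ℓ ≤ corner a h x t i + t
      linarith
  have hstep : E ∩ kube a h x s ⊆ (E ∩ kube a h x t) ∪ (kube a h x s \ subBox) := by
    intro y hy
    by_cases hyt : y ∈ kube a h x t
    · exact Or.inl ⟨hy.1, hyt⟩
    · exact Or.inr ⟨hy.2, fun hcon => hyt (hsub2 hcon)⟩
  have hμsb : volume subBox = (ENNReal.ofReal ℓ) ^ n := by
    rw [hsb, Real.volume_Icc_pi]; simp
  have hμsb_fin : volume subBox ≠ ∞ := by
    rw [hμsb]; exact ENNReal.pow_ne_top ENNReal.ofReal_ne_top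
  have hdiff : volume (kube a h x s \ subBox) =
      volume (kube a h x s) - volume subBox :=
    measure_diff hsub1 measurableSet_Icc.nullMeasurableSet hμsb_fin
  have hmono : volume (E ∩ kube a h x s) ≤
      volume (E ∩ kube a h x t) + volume (kube a h x s \ subBox) :=
    (measure_mono hstep).trans (measure_union_le _ _)
  have hrhs_fin : volume (E ∩ kube a h x t) + volume (kube a h x s \ subBox) ≠ ∞ := by
    apply ENNReal.add_ne_top.2
    exact ⟨hEKt_fin, fun hcon => hKs_fin (top_le_iff.1 (hcon ▸ measure_mono diff_subset))⟩
  have htR := ENNReal.toReal_mono hrhs_fin hmono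
  rw [ENNReal.toReal_add hEKt_fin
      (fun hcon => hKs_fin (top_le_iff.1 (hcon ▸ measure_mono diff_subset)))] at htR
  have hdiffR : (volume (kube a h x s \ subBox)).toReal =
      (max s 0) ^ n - (max ℓ 0) ^ n := by
    rw [hdiff, ENNReal.toReal_sub_of_le (measure_mono hsub1) hKs_fin,
      volume_kube, hμsb, ENNReal.toReal_pow, ENNReal.toReal_pow,
      ENNReal.toReal_ofReal', ENNReal.toReal_ofReal']
  have hinner : (max ℓ 0) ^ n = (max (min s t - 2 * |s - t|) 0) ^ n := by rw [hℓdef]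
  rw [hdiffR] at htR
  have := pow_le_pow_left₀ (le_max_right (s ⊔ t) 0) (le_refl (max (max s t) 0)) n
  linarith [houter, htR, hinner.ge, hinner.le]

lemma F_cont (a : Fin n → ℝ) (h : ℝ) (E : Set (Fin n → ℝ)) (x : Fin n → ℝ) {u : ℝ}
    (hu : 0 < u) :
    ContinuousAt (fun s => (volume (E ∩ kube a h x s)).toReal) u := by
  set F : ℝ → ℝ := fun s => (volume (E ∩ kube a h x s)).toReal with hF
  set w : ℝ → ℝ := fun s =>
    (max (max s u) 0) ^ n - (max (min s u - 2 * |s - u|) 0) ^ n with hw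
  have hwcont : Continuous w := by
    apply Continuous.sub
    · exact (((continuous_id.max continuous_const).max continuous_const).pow n)
    · exact ((((continuous_id.min continuous_const).sub
        (continuous_const.mul ((continuous_id.sub continuous_const).abs))).max
          continuous_const).pow n)
  have hwu : w u = 0 := by
    simp only [hw, max_self, min_self, sub_self, abs_zero, mul_zero, sub_zero,
      max_eq_left hu.le]
  have hbound : ∀ s, dist (F s) (F u) ≤ w s := by
    intro s
    rw [Real.dist_eq, abs_sub_le_iff]
    constructor
    · exact F_diff_le a h E x s u
    · have := F_diff_le a h E x u s
      rw [max_comm u s, min_comm u s, abs_sub_comm u s] at this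
      exact this
  rw [ContinuousAt, tendsto_iff_dist_tendsto_zero]
  apply squeeze_zero (fun s => dist_nonneg) hbound
  have := hwcont.tendsto u
  rwa [hwu] at this


lemma mem_of_density {E C : Set (Fin n → ℝ)} (hC : IsClosed C) (hEC : E ⊆ C)
    {x : Fin n → ℝ} (hx : IsDensityPoint E x) : x ∈ C := by
  have hcl : x ∈ closure E := by
    rw [Metric.mem_closure_iff]
    intro ε hε
    have h1 : ∀ᶠ r in 𝓝[>] (0:ℝ),
        (0:ℝ≥0∞) < volume (E ∩ Metric.ball x r) / volume (Metric.ball x r) :=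
      hx.eventually (eventually_gt_nhds zero_lt_one)
    have h2 : Ioo (0:ℝ) ε ∈ 𝓝[>] (0:ℝ) := Ioo_mem_nhdsGT_of_mem ⟨le_rfl, hε⟩
    obtain ⟨r, hr1, hr2⟩ := (h1.and (eventually_of_mem h2 (fun y hy => hy))).exists
    have hne : (E ∩ Metric.ball x r).Nonempty := by
      apply nonempty_of_measure_ne_zero (μ := volume)
      intro hcon
      rw [hcon, ENNReal.zero_div] at hr1
      exact lt_irrefl _ hr1
    obtain ⟨y, hyE, hyb⟩ := hne
    exact ⟨y, hyE, by rw [dist_comm]; exact lt_trans (Metric.mem_ball.1 hyb) hr2.2⟩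

  exact hC.closure_subset ((closure_mono hEC) hcl)

lemma exists_good {a : Fin n → ℝ} {h la : ℝ} {E : Set (Fin n → ℝ)} (hh : 0 < h)
    (hla0 : 0 < la) (hla1 : la < 1) (hE : MeasurableSet E)
    (hEQ : E ⊆ Icc a (fun i => a i + h))
    (hEvol : volume E ≤ ENNReal.ofReal la * volume (Icc a (fun i => a i + h)))
    {x : Fin n → ℝ} (hx : IsDensityPoint E x) :
    ∃ s : ℝ, 0 < s ∧ s ≤ h ∧
      volume (E ∩ kube a h x s) = ENNReal.ofReal la * volume (kube a h x s) := by
  have hxQ : x ∈ Icc a (fun i => a i + h) := mem_of_density isClosed_Icc hEQ hx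
  set F : ℝ → ℝ := fun s => (volume (E ∩ kube a h x s)).toReal with hFdef
  set θ : ℝ := 1 - (1 - la) / 2 ^ (n + 1) with hθdef
  have h2n1 : (2:ℝ) ≤ 2 ^ (n+1) := by
    calc (2:ℝ) = 2^1 := (pow_one 2).symm
    _ ≤ 2 ^ (n+1) := pow_le_pow_right₀ (by norm_num) (by omega)
  have h2pos : (0:ℝ) < 2 ^ (n+1) := by positivity
  have hfrac : (1 - la) / 2 ^ (n+1) ≤ (1 - la) / 2 := by
    apply div_le_div_of_nonneg_left (by linarith) (by norm_num) h2n1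
  have hfracpos : 0 < (1 - la) / 2 ^ (n+1) := div_pos (by linarith) h2pos
  have hθ0 : 0 < θ := by rw [hθdef]; linarith
  have hθ1 : θ < 1 := by rw [hθdef]; linarith
  have hθE : ENNReal.ofReal θ < 1 := by
    rw [ENNReal.ofReal_lt_one]; exact hθ1
  have hev : ∀ᶠ r in 𝓝[>] (0:ℝ),
      ENNReal.ofReal θ < volume (E ∩ Metric.ball x r) / volume (Metric.ball x r) :=
    hx.eventually (eventually_gt_nhds hθE)
  obtain ⟨u, hu, husub⟩ := mem_nhdsGT_iff_exists_Ioc_subset.1 hev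
  set s₀ : ℝ := min u h with hs₀def
  have hs₀0 : 0 < s₀ := lt_min hu hh
  have hs₀h : s₀ ≤ h := min_le_right _ _
  -- strict lower bound for small s
  have hlow : ∀ s : ℝ, 0 < s → s ≤ s₀ → la * s ^ n < F s := by
    intro s hs hss₀
    have hP : ENNReal.ofReal θ <
        volume (E ∩ Metric.ball x s) / volume (Metric.ball x s) :=
      husub ⟨hs, hss₀.trans (min_le_left _ _)⟩
    have hball : volume (Metric.ball x s) = ENNReal.ofReal ((2*s) ^ n) := by
      rw [Real.volume_pi_ball x hs, Fintype.card_fin]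
    have hcball : volume (Metric.closedBall x s) = ENNReal.ofReal ((2*s) ^ n) := by
      rw [Real.volume_pi_closedBall x hs.le, Fintype.card_fin]
    have h2spos : (0:ℝ) < (2*s) ^ n := by positivity
    have hb0 : volume (Metric.ball x s) ≠ 0 := by
      rw [hball]; simp [ENNReal.ofReal_eq_zero]; linarith
    have hbt : volume (Metric.ball x s) ≠ ∞ := by rw [hball]; exact ENNReal.ofReal_ne_top
    rw [ENNReal.lt_div_iff_mul_lt (Or.inl hb0) (Or.inl hbt)] at hP
    -- finiteness
    have hKfin : volume (kube a h x s) ≠ ∞ := by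
      rw [volume_kube]; exact ENNReal.pow_ne_top ENNReal.ofReal_ne_top
    have hEKfin : volume (E ∩ kube a h x s) ≠ ∞ :=
      fun hcon => hKfin (top_le_iff.1 (hcon ▸ measure_mono inter_subset_right))
    have hKEfin : volume (kube a h x s \ E) ≠ ∞ :=
      fun hcon => hKfin (top_le_iff.1 (hcon ▸ measure_mono diff_subset))
    have hcBfin : volume (Metric.closedBall x s) ≠ ∞ := by
      rw [hcball]; exact ENNReal.ofReal_ne_top
    have hcBEfin : volume (Metric.closedBall x s \ E) ≠ ∞ :=
      fun hcon => hcBfin (top_le_iff.1 (hcon ▸ measure_mono diff_subset))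
    have hcBmEfin : volume (Metric.closedBall x s ∩ E) ≠ ∞ :=
      fun hcon => hcBfin (top_le_iff.1 (hcon ▸ measure_mono inter_subset_left))
    have hEbfin : volume (E ∩ Metric.ball x s) ≠ ∞ :=
      fun hcon => hbt (top_le_iff.1 (hcon ▸ measure_mono inter_subset_right))
    -- relations
    have e1 : volume (E ∩ kube a h x s) + volume (kube a h x s \ E)
        = volume (kube a h x s) := by
      have := measure_inter_add_diff (μ := volume) (kube a h x s) hE
      rwa [Set.inter_comm] at this
    have e2 : volume (kube a h x s \ E) ≤ volume (Metric.closedBall x s \ E) :=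
      measure_mono (fun y hy => ⟨kube_subset_closedBall hxQ hs hy.1, hy.2⟩)
    have e3 : volume (Metric.closedBall x s \ E) + volume (Metric.closedBall x s ∩ E)
        = volume (Metric.closedBall x s) := measure_diff_add_inter _ hE
    have e4 : volume (E ∩ Metric.ball x s) ≤ volume (Metric.closedBall x s ∩ E) :=
      measure_mono (fun y hy => ⟨Metric.ball_subset_closedBall hy.2, hy.1⟩)
    -- toReal versions
    have r1 : (volume (E ∩ kube a h x s)).toReal + (volume (kube a h x s \ E)).toReal
        = s ^ n := by
      rw [← ENNReal.toReal_add hEKfin hKEfin, e1, volume_kube, ENNReal.toReal_pow,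
        ENNReal.toReal_ofReal hs.le]
    have r2 : (volume (kube a h x s \ E)).toReal ≤
        (volume (Metric.closedBall x s \ E)).toReal := ENNReal.toReal_mono hcBEfin e2
    have r3 : (volume (Metric.closedBall x s \ E)).toReal +
        (volume (Metric.closedBall x s ∩ E)).toReal = (2*s) ^ n := by
      rw [← ENNReal.toReal_add hcBEfin hcBmEfin, e3, hcball,
        ENNReal.toReal_ofReal h2spos.le]
    have r4 : (volume (E ∩ Metric.ball x s)).toReal ≤
        (volume (Metric.closedBall x s ∩ E)).toReal := ENNReal.toReal_mono hcBmEfin e4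
    have r5 : θ * (2*s) ^ n < (volume (E ∩ Metric.ball x s)).toReal := by
      have := ENNReal.toReal_strict_mono hEbfin hP
      rwa [ENNReal.toReal_mul, ENNReal.toReal_ofReal hθ0.le, hball,
        ENNReal.toReal_ofReal h2spos.le] at this
    have hsn : (0:ℝ) < s ^ n := by positivity
    have hexp : (2*s:ℝ) ^ n = 2 ^ n * s ^ n := mul_pow 2 s n
    have hexp2 : (2:ℝ) ^ (n+1) = 2 * 2 ^ n := by ring
    have r5' : θ * (2*s)^n = (2*s)^n - (1 - la) / 2 * s ^ n := by
      rw [hθdef, hexp]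
      field_simp
      ring
    rw [r5'] at r5
    have hC : (volume (Metric.closedBall x s \ E)).toReal < (1 - la) / 2 * s ^ n := by
      linarith [r3, r4, r5]
    have hprod : 0 < (1 - la) * s ^ n := mul_pos (by linarith) hsn
    show la * s ^ n < (volume (E ∩ kube a h x s)).toReal
    nlinarith [r1, r2, hC, hprod]
  -- the hitting set
  set Aset : Set ℝ := {s : ℝ | s ∈ Icc s₀ h ∧ F s ≤ la * s ^ n} with hAdef
  have hmemh : h ∈ Aset := by
    refine ⟨⟨hs₀h, le_rfl⟩, ?_⟩
    have hEK : E ∩ kube a h x h = E := by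
      rw [kube_self]; exact inter_eq_left.2 hEQ
    have hQfin : ENNReal.ofReal la * volume (Icc a (fun i => a i + h)) ≠ ∞ := by
      rw [volume_Icc_cube]
      exact ENNReal.mul_ne_top ENNReal.ofReal_ne_top
        (ENNReal.pow_ne_top ENNReal.ofReal_ne_top)
    have := ENNReal.toReal_mono hQfin hEvol
    rw [ENNReal.toReal_mul, ENNReal.toReal_ofReal hla0.le, volume_Icc_cube,
      ENNReal.toReal_pow, ENNReal.toReal_ofReal hh.le] at this
    show (volume (E ∩ kube a h x h)).toReal ≤ la * h ^ n
    rw [hEK]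
    exact this
  have hclosed : IsClosed Aset := by
    apply IsSeqClosed.isClosed
    intro seq L hseq hlim
    have hIcc : L ∈ Icc s₀ h :=
      isClosed_Icc.isSeqClosed (fun k => (hseq k).1) hlim
    refine ⟨hIcc, ?_⟩
    have hcF : ContinuousAt F L := F_cont a h E x (hs₀0.trans_le hIcc.1)
    have t1 : Tendsto (fun k => F (seq k)) atTop (𝓝 (F L)) := hcF.tendsto.comp hlim
    have t2 : Tendsto (fun k => la * (seq k) ^ n) atTop (𝓝 (la * L ^ n)) :=
      ((continuous_const.mul (continuous_pow n)).continuousAt.tendsto).comp hlim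
    exact le_of_tendsto_of_tendsto' t1 t2 (fun k => (hseq k).2)
  have hAne : Aset.Nonempty := ⟨h, hmemh⟩
  have hAbdd : BddBelow Aset := ⟨s₀, fun y hy => hy.1.1⟩
  set s₁ := sInf Aset with hs₁def
  have hs₁mem : s₁ ∈ Aset := hclosed.csInf_mem hAne hAbdd
  have hs₁0 : 0 < s₁ := hs₀0.trans_le hs₁mem.1.1
  have hs₀lt : s₀ < s₁ := by
    rcases lt_or_eq_of_le hs₁mem.1.1 with hlt | hEq
    · exact hlt
    · exfalso
      have : s₀ ∈ Aset := hEq ▸ hs₁mem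
      exact absurd this.2 (not_le.2 (hlow s₀ hs₀0 le_rfl))
  have hlt : ∀ s : ℝ, s₀ ≤ s → s < s₁ → la * s ^ n < F s := by
    intro s h1 h2
    have hnot : s ∉ Aset := notMem_of_lt_csInf h2 hAbdd
    by_contra hcon
    push_neg at hcon
    exact hnot ⟨⟨h1, h2.le.trans hs₁mem.1.2⟩, hcon⟩
  have hcont : ContinuousAt F s₁ := F_cont a h E x hs₁0
  have htd : Tendsto F (𝓝[<] s₁) (𝓝 (F s₁)) := hcont.tendsto.mono_left nhdsWithin_le_nhds
  have htd2 : Tendsto (fun s => la * s ^ n) (𝓝[<] s₁) (𝓝 (la * s₁ ^ n)) :=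
    ((continuous_const.mul (continuous_pow n)).continuousAt.tendsto).mono_left
      nhdsWithin_le_nhds
  have hev2 : ∀ᶠ s in 𝓝[<] s₁, la * s ^ n ≤ F s := by
    filter_upwards [Ioo_mem_nhdsLT hs₀lt] with s hs
    exact (hlt s hs.1.le hs.2).le
  have hge : la * s₁ ^ n ≤ F s₁ := le_of_tendsto_of_tendsto htd2 htd hev2
  have hFeq : F s₁ = la * s₁ ^ n := le_antisymm hs₁mem.2 hge
  refine ⟨s₁, hs₁0, hs₁mem.1.2, ?_⟩
  have hKfin : volume (kube a h x s₁) ≠ ∞ := by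
    rw [volume_kube]; exact ENNReal.pow_ne_top ENNReal.ofReal_ne_top
  have hfin1 : volume (E ∩ kube a h x s₁) ≠ ∞ :=
    fun hcon => hKfin (top_le_iff.1 (hcon ▸ measure_mono inter_subset_right))
  have hfin2 : ENNReal.ofReal la * volume (kube a h x s₁) ≠ ∞ :=
    ENNReal.mul_ne_top ENNReal.ofReal_ne_top hKfin
  rw [← ENNReal.toReal_eq_toReal_iff' hfin1 hfin2]
  rw [ENNReal.toReal_mul, ENNReal.toReal_ofReal hla0.le, volume_kube,
    ENNReal.toReal_pow, ENNReal.toReal_ofReal hs₁0.le]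
  exact hFeq


def clsf (a : Fin n → ℝ) (h : ℝ) (x : Fin n → ℝ) (s : ℝ) : Fin n → Fin 3 :=
  fun i => if x i - s / 2 ≤ a i then 0 else if a i + h ≤ x i + s / 2 then 1 else 2

def ctrp (a : Fin n → ℝ) (h : ℝ) (x : Fin n → ℝ) (s : ℝ) : Fin n → ℝ :=
  fun i => corner a h x s i + s / 2

lemma corner_eq_bot {a : Fin n → ℝ} {h : ℝ} {x : Fin n → ℝ} {s : ℝ} {i : Fin n}
    (hb : x i - s / 2 ≤ a i) : corner a h x s i = a i :=
  max_eq_left ((min_le_left _ _).trans (by linarith))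

lemma corner_eq_top {a : Fin n → ℝ} {h : ℝ} {x : Fin n → ℝ} {s : ℝ} {i : Fin n}
    (hnb : ¬ (x i - s / 2 ≤ a i)) (ht : a i + h ≤ x i + s / 2) (hsh : s ≤ h) :
    corner a h x s i = a i + h - s := by
  push_neg at hnb
  have hmin : min (x i - s / 2) (a i + h - s) = a i + h - s := min_eq_right (by linarith)
  show max (a i) (min (x i - s / 2) (a i + h - s)) = a i + h - s
  rw [hmin]
  exact max_eq_right (by linarith)

lemma corner_eq_free {a : Fin n → ℝ} {h : ℝ} {x : Fin n → ℝ} {s : ℝ} {i : Fin n}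
    (hnb : ¬ (x i - s / 2 ≤ a i)) (hnt : ¬ (a i + h ≤ x i + s / 2)) :
    corner a h x s i = x i - s / 2 := by
  push_neg at hnb hnt
  have hmin : min (x i - s / 2) (a i + h - s) = x i - s / 2 := min_eq_left (by linarith)
  show max (a i) (min (x i - s / 2) (a i + h - s)) = x i - s / 2
  rw [hmin]
  exact max_eq_right (by linarith)

lemma cover_lemma {a : Fin n → ℝ} {h : ℝ} {x z : Fin n → ℝ} {sx sz : ℝ}
    (hxQ : x ∈ Icc a (fun i => a i + h)) (hsx : 0 < sx) (hsxh : sx ≤ h)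
    (hsz : 0 < sz) (hszh : sz ≤ h)
    (hcl : clsf a h x sx = clsf a h z sz)
    (hd : dist (ctrp a h x sx) (ctrp a h z sz) < sz / 2) :
    x ∈ kube a h z sz := by
  have hdi := (dist_pi_lt_iff (by linarith : (0:ℝ) < sz / 2)).1 hd
  have key : ∀ i, corner a h z sz i ≤ x i ∧ x i ≤ corner a h z sz i + sz := by
    intro i
    have hci : (if x i - sx / 2 ≤ a i then (0 : Fin 3)
        else if a i + h ≤ x i + sx / 2 then 1 else 2) =
        (if z i - sz / 2 ≤ a i then (0 : Fin 3)
        else if a i + h ≤ z i + sz / 2 then 1 else 2) := congrFun hcl i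
    have hdii : |corner a h x sx i + sx / 2 - (corner a h z sz i + sz / 2)| < sz / 2 := by
      have := hdi i
      rwa [Real.dist_eq] at this
    have hx1 := hxQ.1 i
    have hx2 := hxQ.2 i
    simp only at hx1 hx2
    by_cases hbx : x i - sx / 2 ≤ a i
    · by_cases hbz : z i - sz / 2 ≤ a i
      · rw [corner_eq_bot hbx, corner_eq_bot hbz] at hdii
        rw [abs_lt] at hdii
        rw [corner_eq_bot hbz]
        constructor <;> linarith
      · rw [if_pos hbx, if_neg hbz] at hci
        by_cases htz : a i + h ≤ z i + sz / 2
        · rw [if_pos htz] at hci; exact absurd hci (by decide)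
        · rw [if_neg htz] at hci; exact absurd hci (by decide)
    · by_cases htx : a i + h ≤ x i + sx / 2
      · by_cases hbz : z i - sz / 2 ≤ a i
        · rw [if_neg hbx, if_pos htx, if_pos hbz] at hci
          exact absurd hci (by decide)
        · by_cases htz : a i + h ≤ z i + sz / 2
          · rw [corner_eq_top hbx htx hsxh, corner_eq_top hbz htz hszh] at hdii
            rw [corner_eq_top hbz htz hszh]
            rw [abs_lt] at hdii
            constructor <;> linarith
          · rw [if_neg hbx, if_pos htx, if_neg hbz, if_neg htz] at hci
            exact absurd hci (by decide)
      · by_cases hbz : z i - sz / 2 ≤ a i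
        · rw [if_neg hbx, if_neg htx, if_pos hbz] at hci
          exact absurd hci (by decide)
        · by_cases htz : a i + h ≤ z i + sz / 2
          · rw [if_neg hbx, if_neg htx, if_neg hbz, if_pos htz] at hci
            exact absurd hci (by decide)
          · rw [corner_eq_free hbx htx, corner_eq_free hbz htz] at hdii
            rw [corner_eq_free hbz htz]
            rw [abs_lt] at hdii
            constructor <;> linarith
  exact ⟨fun i => (key i).1, fun i => (key i).2⟩

lemma tsum_indicator_le_one {γ : Type*} {g : γ → Set (Fin n → ℝ)}
    (hd : Pairwise (Function.onFun Disjoint g)) (y : Fin n → ℝ) :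
    ∑' j, (g j).indicator (1 : (Fin n → ℝ) → ℝ≥0∞) y ≤ 1 := by
  by_cases hy : ∃ j, y ∈ g j
  · obtain ⟨j₀, hj₀⟩ := hy
    rw [tsum_eq_single j₀ ?_]
    · simp [indicator_of_mem hj₀]
    · intro b hb
      exact indicator_of_notMem
        (fun hmem => Set.disjoint_left.1 (hd hb) hmem hj₀) _
  · push_neg at hy
    rw [tsum_congr (fun j => indicator_of_notMem (hy j) _)]
    simp

lemma countable_of_disjoint {β : Type*} {S : Set β} {f : β → Set (Fin n → ℝ)}
    {W : Set (Fin n → ℝ)} (hd : S.PairwiseDisjoint f)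
    (hm : ∀ j, MeasurableSet (f j)) (hpos : ∀ j, 0 < volume (f j))
    (hbd : ∀ j, f j ⊆ W) (hW : volume W ≠ ∞) : S.Countable := by
  have hcnt := MeasureTheory.Measure.countable_meas_pos_of_disjoint_of_meas_iUnion_ne_top
    (μ := volume) (ι := ↥S) (As := fun j => f ↑j) (fun j => hm _)
    (fun i j hij => hd i.2 j.2 (fun hc => hij (Subtype.ext hc)))
    (by
      refine fun hcon => hW (top_le_iff.1 (hcon ▸ measure_mono ?_))
      exact iUnion_subset (fun i => hbd _))
  have huniv : {i : ↥S | 0 < volume (f ↑i)} = univ := eq_univ_of_forall (fun i => hpos _)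
  rw [huniv] at hcnt
  exact Set.countable_coe_iff.mp (Set.countable_univ_iff.mp hcnt)


end Stmt2Aux
end

/-- Lemma of Mateu–Mattila–Nicolau–Orobitg: the covering lemma. -/
theorem stmt2 (n : ℕ) :
    ∃ B : ℕ, 0 < B ∧
      ∀ la : ℝ, la ∈ Set.Ioo (0 : ℝ) 1 →
      ∀ Q : Set (Fin n → ℝ), IsCube Q →
      ∀ E : Set (Fin n → ℝ), MeasurableSet E → E ⊆ Q →
        volume E ≤ ENNReal.ofReal la * volume Q →
        ∃ (ι : Type) (_ : Countable ι) (R : ι → Set (Fin n → ℝ)),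
          (∀ j, IsCube (R j) ∧ R j ⊆ Q ∧
            volume (R j ∩ E) = ENNReal.ofReal la * volume (R j)) ∧
          (∀ x ∈ Q, ∑' j : ι, (R j).indicator (1 : (Fin n → ℝ) → ℝ≥0∞) x ≤ (B : ℝ≥0∞)) ∧
          (∀ x, IsDensityPoint E x → x ∈ ⋃ j, R j) := by
  classical
  open Stmt2Aux in
  obtain ⟨N, τ, hτ, hSC⟩ := HasBesicovitchCovering.no_satelliteConfig (α := Fin n → ℝ)
  refine ⟨3 ^ n * N + 1, Nat.succ_pos _, ?_⟩
  intro la hla Q hQ E hE hEQ hEvol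
  obtain ⟨a, h, hh, rfl⟩ := hQ
  set D := {x : Fin n → ℝ | IsDensityPoint E x} with hD
  have hgood : ∀ x : ↥D, ∃ s : ℝ, 0 < s ∧ s ≤ h ∧
      volume (E ∩ Stmt2Aux.kube a h ↑x s) =
        ENNReal.ofReal la * volume (Stmt2Aux.kube a h ↑x s) :=
    fun x => Stmt2Aux.exists_good hh hla.1 hla.2 hE hEQ hEvol x.2
  choose sf hsf0 hsfh hsfvol using hgood
  have hDQ : ∀ x : ↥D, ↑x ∈ Icc a (fun i => a i + h) :=
    fun x => Stmt2Aux.mem_of_density isClosed_Icc hEQ x.2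
  have hQfin : volume (Icc a (fun i => a i + h)) ≠ ∞ := by
    rw [Stmt2Aux.volume_Icc_cube]
    exact ENNReal.pow_ne_top ENNReal.ofReal_ne_top
  have key : ∀ v : Fin n → Fin 3,
      ∃ (ι' : Type) (_ : Countable ι') (R : ι' → Set (Fin n → ℝ)),
        (∀ j, ∃ x : ↥D, R j = Stmt2Aux.kube a h ↑x (sf x)) ∧
        (∀ y : Fin n → ℝ,
          ∑' j, (R j).indicator (1 : (Fin n → ℝ) → ℝ≥0∞) y ≤ (N : ℝ≥0∞)) ∧
        (∀ x : ↥D, Stmt2Aux.clsf a h ↑x (sf x) = v → ↑x ∈ ⋃ j, R j) := by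
    intro v
    by_cases hne : Nonempty {p : ↥D // Stmt2Aux.clsf a h ↑p (sf p) = v}
    case neg =>
      refine ⟨PEmpty, inferInstance, fun j => j.elim, fun j => j.elim, ?_, ?_⟩
      · intro y
        simp
      · intro x hx
        exact absurd ⟨⟨x, hx⟩⟩ hne
    case pos =>
      haveI := hne
      set β := {p : ↥D // Stmt2Aux.clsf a h ↑p (sf p) = v} with hβ
      set q : Besicovitch.BallPackage β (Fin n → ℝ) :=
        { c := fun p => Stmt2Aux.ctrp a h ↑p.1 (sf p.1)
          r := fun p => sf p.1 / 2
          rpos := fun p => by linarith [hsf0 p.1]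
          r_bound := h
          r_le := fun p => by linarith [hsfh p.1, hh] } with hq
      obtain ⟨Sel, hSdisj, hScov⟩ := Besicovitch.exist_disjoint_covering_families hτ hSC q
      have hcb : ∀ p : β, Stmt2Aux.kube a h ↑p.1 (sf p.1) =
          Metric.closedBall (q.c p) (q.r p) := by
        intro p
        exact Stmt2Aux.kube_eq_closedBall a h _ (hsf0 p.1).le
      have hcountSel : ∀ i : Fin N, (Sel i).Countable := by
        intro i
        refine Stmt2Aux.countable_of_disjoint
          (f := fun p : β => Metric.closedBall (q.c p) (q.r p))
          (W := Icc a (fun i => a i + h)) (hSdisj i) ?_ ?_ ?_ hQfin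
        · intro j
          rw [← hcb]
          exact measurableSet_Icc
        · intro j
          rw [← hcb, Stmt2Aux.volume_kube]
          exact ENNReal.pow_pos (ENNReal.ofReal_pos.2 (hsf0 _)) n
        · intro j
          rw [← hcb]
          exact Stmt2Aux.kube_subset a _ (hsfh _)
      haveI : ∀ i : Fin N, Countable ↥(Sel i) := fun i => (hcountSel i).to_subtype
      refine ⟨(i : Fin N) × ↥(Sel i), inferInstance,
        fun j => Stmt2Aux.kube a h ↑j.2.1.1 (sf j.2.1.1), fun j => ⟨j.2.1.1, rfl⟩, ?_, ?_⟩
      · intro y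
        rw [ENNReal.tsum_sigma']
        have hle : ∀ i : Fin N,
            ∑' (j : ↥(Sel i)),
              (Stmt2Aux.kube a h ↑j.1.1 (sf j.1.1)).indicator
                (1 : (Fin n → ℝ) → ℝ≥0∞) y ≤ 1 := by
          intro i
          refine Stmt2Aux.tsum_indicator_le_one ?_ y
          intro j k hjk
          have hd2 := hSdisj i j.2 k.2 (fun hc => hjk (Subtype.ext hc))
          show Disjoint (Stmt2Aux.kube a h ↑j.1.1 (sf j.1.1))
            (Stmt2Aux.kube a h ↑k.1.1 (sf k.1.1))
          rw [hcb j.1, hcb k.1]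
          exact hd2
        calc ∑' (i : Fin N), ∑' (j : ↥(Sel i)),
              (Stmt2Aux.kube a h ↑j.1.1 (sf j.1.1)).indicator
                (1 : (Fin n → ℝ) → ℝ≥0∞) y
            ≤ ∑' (_ : Fin N), (1 : ℝ≥0∞) := ENNReal.tsum_le_tsum hle
          _ = (N : ℝ≥0∞) := by
              simp [tsum_fintype]
      · intro x hx
        have hmem : q.c ⟨x, hx⟩ ∈ ⋃ i, ⋃ j ∈ Sel i, Metric.ball (q.c j) (q.r j) :=
          hScov (mem_range_self _)
        simp only [mem_iUnion] at hmem
        obtain ⟨i, j, hjSel, hmemb⟩ := hmem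
        have hxk : ↑x ∈ Stmt2Aux.kube a h ↑j.1 (sf j.1) := by
          refine Stmt2Aux.cover_lemma (hDQ x) (hsf0 x) (hsfh x) (hsf0 j.1) (hsfh j.1)
            ?_ ?_
          · rw [hx, j.2]
          · exact Metric.mem_ball.1 hmemb
        exact mem_iUnion.2 ⟨⟨i, j, hjSel⟩, hxk⟩
  choose ι' hcnt' R' hform' htsum' hcov' using key
  haveI : ∀ v, Countable (ι' v) := hcnt'
  refine ⟨(v : Fin n → Fin 3) × ι' v, inferInstance, fun j => R' j.1 j.2, ?_, ?_, ?_⟩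
  · intro j
    obtain ⟨x, hxj⟩ := hform' j.1 j.2
    dsimp only
    rw [hxj]
    refine ⟨Stmt2Aux.kube_isCube (hsf0 x), Stmt2Aux.kube_subset a _ (hsfh x), ?_⟩
    rw [Set.inter_comm]
    exact hsfvol x
  · intro y _
    rw [ENNReal.tsum_sigma']
    calc ∑' (v : Fin n → Fin 3), ∑' (j : ι' v),
          (R' v j).indicator (1 : (Fin n → ℝ) → ℝ≥0∞) y
        ≤ ∑' (_ : Fin n → Fin 3), (N : ℝ≥0∞) :=
          ENNReal.tsum_le_tsum (fun v => htsum' v y)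
      _ = ((3 ^ n * N : ℕ) : ℝ≥0∞) := by
          rw [tsum_fintype]
          simp [Finset.sum_const, Finset.card_univ, Fintype.card_fun]
      _ ≤ ((3 ^ n * N + 1 : ℕ) : ℝ≥0∞) := by
          exact_mod_cast Nat.cast_le.2 (Nat.le_succ _)
  · intro x hx
    have hxD : x ∈ D := hx
    have hmem := hcov' (Stmt2Aux.clsf a h x (sf ⟨x, hxD⟩)) ⟨x, hxD⟩ rfl
    rw [mem_iUnion] at hmem
    obtain ⟨j, hj⟩ := hmem
    exact mem_iUnion.2 ⟨⟨_, j⟩, hj⟩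
end

section
/- For every measurable function f on ℝⁿ, every λ ∈ (0,1) and every α > 0, there is the set identity {x ∈ ℝⁿ : m_λ f(x) > α} = {x ∈ ℝⁿ : M χ_{{|f| > α}}(x) > λ}. -/
open MeasureTheory Set Filter
open scoped ENNReal Topology

lemma rearr_lt_iff {n : ℕ} (g : (Fin n → ℝ) → ℝ≥0∞) (t β : ℝ≥0∞)
    (hβ0 : 0 < β) (hβ : β ≠ ∞) :
    β < rearr g t ↔ t < volume {y | β < g y} := by
  constructor
  · intro h
    by_contra h'
    push_neg at h'
    have : β ∈ {α : ℝ≥0∞ | 0 < α ∧ volume {y | α < g y} ≤ t} := ⟨hβ0, h'⟩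
    exact absurd (sInf_le this) h.not_ge
  · intro ht
    by_contra h'
    push_neg at h'
    have hvol : ∀ k : ℕ, volume {y | β + (k : ℝ≥0∞)⁻¹ < g y} ≤ t := by
      intro k
      rcases eq_or_ne ((k : ℝ≥0∞)⁻¹) ∞ with hk | hk
      · have : {y | β + (k : ℝ≥0∞)⁻¹ < g y} = ∅ := by
          ext y; simp [hk]
        simp [this]
      · have hlt : rearr g t < β + (k : ℝ≥0∞)⁻¹ :=
          lt_of_le_of_lt h' (ENNReal.lt_add_right hβ (by simpa using hk))
        obtain ⟨γ, ⟨hγ0, hγt⟩, hγlt⟩ := sInf_lt_iff.mp hlt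
        refine le_trans (measure_mono ?_) hγt
        intro y hy
        exact lt_trans hγlt hy
    have hmono : Monotone fun k : ℕ => {y | β + (k : ℝ≥0∞)⁻¹ < g y} := by
      intro a b hab y hy
      simp only [mem_setOf_eq] at hy ⊢
      refine lt_of_le_of_lt ?_ hy
      have : (b : ℝ≥0∞)⁻¹ ≤ (a : ℝ≥0∞)⁻¹ :=
        ENNReal.inv_le_inv.mpr (by exact_mod_cast hab)
      exact add_le_add_right this β
    have hun : {y | β < g y} = ⋃ k : ℕ, {y | β + (k : ℝ≥0∞)⁻¹ < g y} := by
      ext y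
      simp only [mem_setOf_eq, mem_iUnion]
      constructor
      · intro hy
        rcases eq_or_ne (g y) ∞ with hg | hg
        · exact ⟨1, by simp [hg, ENNReal.add_lt_top, hβ.lt_top]⟩
        · obtain ⟨k, hk⟩ := ENNReal.exists_inv_nat_lt (tsub_pos_of_lt hy).ne'
          refine ⟨k, ?_⟩
          calc β + (k : ℝ≥0∞)⁻¹ < β + (g y - β) := by
                exact ENNReal.add_lt_add_left hβ hk
            _ = g y := add_tsub_cancel_of_le hy.le
      · rintro ⟨k, hk⟩
        exact lt_of_le_of_lt le_self_add hk
    rw [hun, (hmono.directed_le).measure_iUnion] at ht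
    exact absurd (iSup_le hvol) ht.not_ge

lemma cube_volume {n : ℕ} {Q : Set (Fin n → ℝ)} (hQ : IsCube Q) :
    0 < volume Q ∧ volume Q < ∞ := by
  obtain ⟨a, h, hh, rfl⟩ := hQ
  rw [Real.volume_Icc_pi]
  simp only [add_sub_cancel_left, Finset.prod_const]
  exact ⟨ENNReal.pow_pos (by simp [hh]) _, ENNReal.pow_lt_top ENNReal.ofReal_lt_top⟩

/-- the level-set identity `{m_λ f > α} = {M χ_{{|f|>α}} > λ}`. -/
theorem stmt3 (n : ℕ) (f : (Fin n → ℝ) → ℝ) (hf : Measurable f)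
    (la : ℝ) (hla : la ∈ Set.Ioo (0 : ℝ) 1) (α : ℝ) (hα : 0 < α) :
    {x | ENNReal.ofReal α < mMed la (toE f) x} =
      {x | ENNReal.ofReal la < maximal (Set.indicator {y | α < |f y|} 1) x} := by
  have hE : MeasurableSet {y | α < |f y|} := measurableSet_lt measurable_const hf.abs
  ext x
  simp only [mem_setOf_eq, mMed, maximal, lt_iSup_iff]
  refine exists_congr fun Q => exists_congr fun hQ => exists_congr fun hxQ => ?_
  obtain ⟨hQ0, hQtop⟩ := cube_volume hQ
  have hset : {y | ENNReal.ofReal α < Q.indicator (toE f) y} = {y | α < |f y|} ∩ Q := by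
    ext y
    by_cases hy : y ∈ Q
    · simp [indicator_of_mem hy, toE, hy, ENNReal.ofReal_lt_ofReal_iff_of_nonneg hα.le]
    · simp [indicator_of_notMem hy, hy]
  have hint : (∫⁻ y in Q, ({y | α < |f y|}.indicator 1) y) = volume ({y | α < |f y|} ∩ Q) := by
    rw [lintegral_indicator_one hE, Measure.restrict_apply hE]
  rw [rearr_lt_iff _ _ _ (by simpa using hα) ENNReal.ofReal_ne_top, hset, hint,
    ENNReal.lt_div_iff_mul_lt (Or.inl hQ0.ne') (Or.inl hQtop.ne)]
end

section
/- There exists a constant B_n > 0 depending only on n such that, setting γ := 1/(1 + (1-λ)/(B_n λ)) for λ ∈ (0,1), the following holds: for every measurable function f on ℝⁿ, every λ, η ∈ (0,1), and every cube Q ⊂ ℝⁿ, one has (f χ_Q)*(γη|Q|) ≤ ((m_λ f) χ_Q)*(η|Q|). -/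
open MeasureTheory Set Filter
open scoped ENNReal Topology

noncomputable section Stmt5Aux

open Metric

namespace Stmt5Aux

/-! ### One-dimensional clamped intervals -/

/-- Left endpoint of the interval of length `r` containing `x`, clamped inside `[a, a+h]`. -/
def cc (a h x r : ℝ) : ℝ := max a (min (x - r / 2) (a + h - r))

lemma a_le_cc (a h x r : ℝ) : a ≤ cc a h x r := le_max_left _ _

lemma cc_add_eq (a h x r : ℝ) :
    cc a h x r + r = max (a + r) (min (x + r / 2) (a + h)) := by
  unfold cc
  have h1 : x - r / 2 + r = x + r / 2 := by ring
  have h2 : a + h - r + r = a + h := by ring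
  rw [← max_add_add_right, ← min_add_add_right, h1, h2]

lemma cc_le_x {a h x r : ℝ} (hx1 : a ≤ x) (hr : 0 ≤ r) : cc a h x r ≤ x :=
  max_le hx1 (le_trans (min_le_left _ _) (by linarith))

lemma x_le_cc_add {a h x r : ℝ} (hx2 : x ≤ a + h) (hr : 0 ≤ r) : x ≤ cc a h x r + r := by
  rw [cc_add_eq]
  exact le_trans (le_min (by linarith) hx2) (le_max_right _ _)

lemma cc_add_le {a h x r : ℝ} (hrh : r ≤ h) : cc a h x r + r ≤ a + h := by
  rw [cc_add_eq]
  exact max_le (by linarith) (min_le_right _ _)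

lemma cc_anti {a h x r r' : ℝ} (hrr : r ≤ r') : cc a h x r' ≤ cc a h x r :=
  max_le_max le_rfl (min_le_min (by linarith) (by linarith))

lemma cc_add_mono {a h x r r' : ℝ} (hrr : r ≤ r') : cc a h x r + r ≤ cc a h x r' + r' := by
  rw [cc_add_eq, cc_add_eq]
  exact max_le_max (by linarith) (min_le_min (by linarith) le_rfl)

lemma cc_top (a h x : ℝ) : cc a h x h = a := by
  unfold cc
  have h1 : a + h - h = a := by ring
  rw [h1]
  exact max_eq_left (le_trans (min_le_right _ _) le_rfl)

lemma cc_enlarge {a h x z r ρ w : ℝ} (hz1 : a ≤ z) (hz2 : z ≤ a + h)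
    (hρ0 : 0 < ρ) (hr2 : r ≤ 2 * ρ) (h5 : 5 * ρ ≤ h) (hrh : r ≤ h)
    (hw1 : cc a h x r ≤ w) (hw2 : w ≤ cc a h x r + r)
    (hw3 : cc a h z ρ ≤ w) (hw4 : w ≤ cc a h z ρ + ρ) :
    cc a h z (5 * ρ) ≤ cc a h x r ∧ cc a h x r + r ≤ cc a h z (5 * ρ) + 5 * ρ := by
  constructor
  · -- left endpoints
    have key : min (z - 5 * ρ / 2) (a + h - 5 * ρ) ≤ min (z - ρ / 2) (a + h - ρ) - 2 * ρ := by
      rcases le_total (z - ρ / 2) (a + h - ρ) with hc | hc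
      · rw [min_eq_left hc]; exact le_trans (min_le_left _ _) (by linarith)
      · rw [min_eq_right hc]; exact le_trans (min_le_right _ _) (by linarith)
    have hminw : min (z - ρ / 2) (a + h - ρ) ≤ w := le_trans (le_max_right a _) hw3
    refine max_le (a_le_cc _ _ _ _) ?_
    have hmin5 : min (z - 5 * ρ / 2) (a + h - 5 * ρ) ≤ w - r := by linarith
    linarith [hw2, a_le_cc a h x r]
  · -- right endpoints
    have hL1 : cc a h x r + r ≤ a + h := cc_add_le hrh
    have hL2 : cc a h x r + r ≤ w + r := by linarith
    rcases le_total (z + 5 * ρ / 2) (a + h) with hc | hc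
    · rcases le_total (z + ρ / 2) (a + h) with hc2 | hc2
      · have hw4' : w ≤ max (a + ρ) (z + ρ / 2) := by
          rw [cc_add_eq, min_eq_left hc2] at hw4; exact hw4
        have hstep : max (a + ρ) (z + ρ / 2) + 2 * ρ ≤ max (a + 5 * ρ) (z + 5 * ρ / 2) := by
          rw [← max_add_add_right]
          exact max_le_max (by linarith) (by linarith)
        have hfin : cc a h x r + r ≤ max (a + 5 * ρ) (z + 5 * ρ / 2) := by
          have := le_max_left (a + ρ) (z + ρ / 2)
          have := le_max_right (a + ρ) (z + ρ / 2)
          linarith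
        have hG : cc a h z (5 * ρ) + 5 * ρ = max (a + 5 * ρ) (z + 5 * ρ / 2) := by
          rw [cc_add_eq, min_eq_left hc]
        rw [hG]
        exact hfin
      · linarith
    · have hG : cc a h z (5 * ρ) + 5 * ρ
          = max (a + 5 * ρ) (min (z + 5 * ρ / 2) (a + h)) := cc_add_eq _ _ _ _
      rw [hG]
      calc cc a h x r + r ≤ a + h := hL1
        _ = min (z + 5 * ρ / 2) (a + h) := (min_eq_right hc).symm
        _ ≤ _ := le_max_right _ _

/-! ### Clamped cubes -/

variable {n : ℕ}

/-- Cube of side `r` containing `x`, clamped inside the cube `[a, a+h]`. -/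
def Qc (a : Fin n → ℝ) (h : ℝ) (x : Fin n → ℝ) (r : ℝ) : Set (Fin n → ℝ) :=
  Set.Icc (fun i => cc (a i) h (x i) r) (fun i => cc (a i) h (x i) r + r)

lemma measurableSet_Qc (a : Fin n → ℝ) (h : ℝ) (x : Fin n → ℝ) (r : ℝ) :
    MeasurableSet (Qc a h x r) := measurableSet_Icc

lemma isCube_Qc (a : Fin n → ℝ) (h : ℝ) (x : Fin n → ℝ) {r : ℝ} (hr : 0 < r) :
    IsCube (Qc a h x r) := ⟨_, r, hr, rfl⟩

lemma volume_Icc_pi {a b : Fin n → ℝ} :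
    volume (Set.Icc a b) = ∏ i, ENNReal.ofReal (b i - a i) := by
  rw [← Set.pi_univ_Icc, volume_pi_pi]
  simp [Real.volume_Icc]

lemma volume_Qc (a : Fin n → ℝ) (h : ℝ) (x : Fin n → ℝ) {r : ℝ} (hr : 0 ≤ r) :
    volume (Qc a h x r) = ENNReal.ofReal (r ^ n) := by
  rw [Qc, volume_Icc_pi]
  simp only [add_sub_cancel_left]
  rw [Finset.prod_const, Finset.card_univ, Fintype.card_fin, ENNReal.ofReal_pow hr]

lemma mem_Qc_self {a : Fin n → ℝ} {h : ℝ} {x : Fin n → ℝ} {r : ℝ}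
    (hx : x ∈ Set.Icc a (fun i => a i + h)) (hr : 0 ≤ r) : x ∈ Qc a h x r := by
  refine ⟨fun i => cc_le_x (hx.1 i) hr, fun i => x_le_cc_add (hx.2 i) hr⟩

lemma Qc_subset_Icc {a : Fin n → ℝ} {h : ℝ} {x : Fin n → ℝ} {r : ℝ} (hrh : r ≤ h) :
    Qc a h x r ⊆ Set.Icc a (fun i => a i + h) :=
  Set.Icc_subset_Icc (fun i => a_le_cc _ _ _ _) (fun i => cc_add_le hrh)

lemma Qc_mono {a : Fin n → ℝ} {h : ℝ} {x : Fin n → ℝ} {r r' : ℝ} (hrr : r ≤ r') :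
    Qc a h x r ⊆ Qc a h x r' :=
  Set.Icc_subset_Icc (fun i => cc_anti hrr) (fun i => cc_add_mono hrr)

lemma Qc_top (a : Fin n → ℝ) (h : ℝ) (x : Fin n → ℝ) :
    Qc a h x h = Set.Icc a (fun i => a i + h) := by
  have h1 : (fun i => cc (a i) h (x i) h) = a := funext fun i => cc_top _ _ _
  have h2 : (fun i => cc (a i) h (x i) h + h) = (fun i => a i + h) :=
    funext fun i => by rw [cc_top]
  rw [Qc, h1, h2]

lemma Qc_subset_closedBall {a : Fin n → ℝ} {h : ℝ} {x : Fin n → ℝ} {r : ℝ}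
    (hx : x ∈ Qc a h x r) (hr : 0 ≤ r) : Qc a h x r ⊆ closedBall x r := by
  intro y hy
  rw [mem_closedBall, dist_pi_le_iff hr]
  intro i
  rw [Real.dist_eq, abs_le]
  have h1 := Pi.le_def.1 hy.1 i
  have h2 := Pi.le_def.1 hy.2 i
  have h3 := Pi.le_def.1 hx.1 i
  have h4 := Pi.le_def.1 hx.2 i
  constructor <;> linarith

lemma volume_closedBall_pi (x : Fin n → ℝ) {r : ℝ} (hr : 0 ≤ r) :
    volume (closedBall x r) = ENNReal.ofReal ((2 * r) ^ n) := by
  rw [closedBall_pi x hr, volume_pi_pi]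
  have hball : ∀ i : Fin n, volume (closedBall (x i) r) = ENNReal.ofReal (2 * r) := fun i => by
    rw [Real.closedBall_eq_Icc, Real.volume_Icc]
    congr 1; ring
  simp only [hball]
  rw [Finset.prod_const, Finset.card_univ, Fintype.card_fin, ENNReal.ofReal_pow (by linarith)]

lemma Qc_enlarge {a : Fin n → ℝ} {h r ρ : ℝ} {x z : Fin n → ℝ}
    (hz : z ∈ Set.Icc a (fun i => a i + h))
    (hρ0 : 0 < ρ) (hρh : ρ ≤ h) (hrh : r ≤ h) (hr2 : r ≤ 2 * ρ)
    (hne : (Qc a h x r ∩ Qc a h z ρ).Nonempty) :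
    Qc a h x r ⊆ Qc a h z (min (5 * ρ) h) := by
  obtain ⟨w, hwx, hwz⟩ := hne
  rcases le_total h (5 * ρ) with hc | hc
  · rw [min_eq_right hc, Qc_top]
    exact Qc_subset_Icc hrh
  · rw [min_eq_left hc]
    refine Set.Icc_subset_Icc (fun i => ?_) (fun i => ?_)
    · exact (cc_enlarge (hz.1 i) (hz.2 i) hρ0 hr2 hc hrh
        (hwx.1 i) (hwx.2 i) (hwz.1 i) (hwz.2 i)).1
    · exact (cc_enlarge (hz.1 i) (hz.2 i) hρ0 hr2 hc hrh
        (hwx.1 i) (hwx.2 i) (hwz.1 i) (hwz.2 i)).2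

/-! ### Basic facts about `rearr` and `mMed` -/

lemma le_mMed {la : ℝ} {f : (Fin n → ℝ) → ℝ≥0∞} {R : Set (Fin n → ℝ)} (hR : IsCube R)
    {y : Fin n → ℝ} (hy : y ∈ R) :
    rearr (R.indicator f) (ENNReal.ofReal la * volume R) ≤ mMed la f y :=
  le_iSup_of_le R (le_iSup_of_le hR (le_iSup_of_le hy le_rfl))

/-! ### The stopping-radius lemma -/

lemma exists_stopping {A : Set (Fin n → ℝ)}
    {a : Fin n → ℝ} {h : ℝ} (hh : 0 < h) {x : Fin n → ℝ}
    (hx : x ∈ Set.Icc a (fun i => a i + h))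
    {l' : ℝ} (hl'0 : 0 < l') (hl'1 : l' < 1)
    (htop : (volume (A ∩ Qc a h x h)).toReal ≤ l' * h ^ n)
    (hdens : Tendsto (fun ρ : ℝ =>
        volume (A ∩ closedBall x ρ) / volume (closedBall x ρ)) (𝓝[>] (0 : ℝ)) (𝓝 1)) :
    ∃ r : ℝ, 0 < r ∧ r ≤ h ∧
      l' * r ^ n ≤ (volume (A ∩ Qc a h x r)).toReal ∧
      ∀ r', r ≤ r' → r' ≤ h → (volume (A ∩ Qc a h x r')).toReal ≤ l' * r' ^ n := by
  classical
  set φ : ℝ → ℝ := fun ρ => (volume (A ∩ Qc a h x ρ)).toReal with hφdef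
  have hφfin : ∀ ρ : ℝ, 0 ≤ ρ → volume (A ∩ Qc a h x ρ) ≠ ⊤ := fun ρ hρ =>
    ne_top_of_le_ne_top (by rw [volume_Qc a h x hρ]; exact ENNReal.ofReal_ne_top)
      (measure_mono Set.inter_subset_right)
  have hφmono : ∀ ρ ρ' : ℝ, 0 ≤ ρ' → ρ ≤ ρ' → φ ρ ≤ φ ρ' := by
    intro ρ ρ' hρ' hle
    exact ENNReal.toReal_mono (hφfin ρ' hρ')
      (measure_mono (Set.inter_subset_inter_right _ (Qc_mono hle)))
  set S : Set ℝ := {ρ : ℝ | ρ ∈ Set.Ioc (0:ℝ) h ∧ l' * ρ ^ n ≤ φ ρ} with hSdef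
  have hSne : S.Nonempty := by
    set ε : ℝ := (1 - l') / 2 ^ n with hεdef
    have h2n : (0:ℝ) < 2 ^ n := by positivity
    have h2n1 : (1:ℝ) ≤ 2 ^ n := one_le_pow₀ (by norm_num)
    have hε0 : 0 < ε := div_pos (by linarith) h2n
    have hε2 : ε * 2 ^ n = 1 - l' := div_mul_cancel₀ _ (ne_of_gt h2n)
    have hε1 : ε ≤ 1 := by nlinarith
    have hlt1 : ENNReal.ofReal (1 - ε) < 1 := by
      rw [← ENNReal.ofReal_one]
      exact (ENNReal.ofReal_lt_ofReal_iff one_pos).2 (by linarith)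
    have hev1 := hdens.eventually (eventually_gt_nhds hlt1)
    have hev2 : ∀ᶠ ρ in 𝓝[>] (0:ℝ), ρ ∈ Set.Ioc (0:ℝ) h :=
      Ioc_mem_nhdsGT_of_mem ⟨le_rfl, hh⟩
    obtain ⟨ρ, hρ1, hρ2⟩ := (hev1.and hev2).exists
    refine ⟨ρ, hρ2, ?_⟩
    have hρ0 : 0 < ρ := hρ2.1
    have hballvol : volume (closedBall x ρ) = ENNReal.ofReal ((2*ρ)^n) :=
      volume_closedBall_pi x (by linarith)
    have hballne : volume (closedBall x ρ) ≠ 0 := by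
      rw [hballvol]; exact (ENNReal.ofReal_pos.2 (by positivity)).ne'
    have hballfin : volume (closedBall x ρ) ≠ ⊤ := by
      rw [hballvol]; exact ENNReal.ofReal_ne_top
    have hmul : ENNReal.ofReal (1 - ε) * volume (closedBall x ρ)
        < volume (A ∩ closedBall x ρ) :=
      (ENNReal.lt_div_iff_mul_lt (Or.inl hballne) (Or.inl hballfin)).1 hρ1
    have hQB : Qc a h x ρ ⊆ closedBall x ρ :=
      Qc_subset_closedBall (mem_Qc_self hx hρ0.le) hρ0.le
    have hsplit : volume (A ∩ closedBall x ρ)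
        ≤ volume (A ∩ Qc a h x ρ) + ENNReal.ofReal ((2*ρ)^n - ρ^n) := by
      have hsub : A ∩ closedBall x ρ ⊆ (A ∩ Qc a h x ρ) ∪ (closedBall x ρ \ Qc a h x ρ) := by
        rintro y ⟨hy1, hy2⟩
        by_cases hy3 : y ∈ Qc a h x ρ
        · exact Or.inl ⟨hy1, hy3⟩
        · exact Or.inr ⟨hy2, hy3⟩
      have hdiff : volume (closedBall x ρ \ Qc a h x ρ) = ENNReal.ofReal ((2*ρ)^n - ρ^n) := by
        rw [measure_diff hQB (measurableSet_Qc a h x ρ).nullMeasurableSet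
            (by rw [volume_Qc a h x hρ0.le]; exact ENNReal.ofReal_ne_top),
          hballvol, volume_Qc a h x hρ0.le, ← ENNReal.ofReal_sub _ (by positivity)]
      calc volume (A ∩ closedBall x ρ)
          ≤ volume ((A ∩ Qc a h x ρ) ∪ (closedBall x ρ \ Qc a h x ρ)) := measure_mono hsub
        _ ≤ volume (A ∩ Qc a h x ρ) + volume (closedBall x ρ \ Qc a h x ρ) :=
            measure_union_le _ _
        _ = volume (A ∩ Qc a h x ρ) + ENNReal.ofReal ((2*ρ)^n - ρ^n) := by rw [hdiff]
    have hABfin : volume (A ∩ closedBall x ρ) ≠ ⊤ :=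
      ne_top_of_le_ne_top hballfin (measure_mono Set.inter_subset_right)
    have hρ2ρ : ρ ^ n ≤ (2*ρ)^n := pow_le_pow_left₀ hρ0.le (by linarith) n
    have hlow : (1 - ε) * (2*ρ)^n ≤ (volume (A ∩ closedBall x ρ)).toReal := by
      have h1 := ENNReal.toReal_mono hABfin hmul.le
      rwa [ENNReal.toReal_mul, hballvol, ENNReal.toReal_ofReal (by linarith),
        ENNReal.toReal_ofReal (by positivity)] at h1
    have hup : (volume (A ∩ closedBall x ρ)).toReal ≤ φ ρ + ((2*ρ)^n - ρ^n) := by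
      have h1 := ENNReal.toReal_mono
        (ENNReal.add_ne_top.2 ⟨hφfin ρ hρ0.le, ENNReal.ofReal_ne_top⟩) hsplit
      rwa [ENNReal.toReal_add (hφfin ρ hρ0.le) ENNReal.ofReal_ne_top,
        ENNReal.toReal_ofReal (by linarith)] at h1
    have hpow : (2*ρ)^n = 2^n * ρ^n := mul_pow 2 ρ n
    have hfin : ε * 2^n * ρ^n = ρ^n - l' * ρ^n := by rw [hε2]; ring
    nlinarith [hlow, hup, hpow, hfin]
  obtain ⟨r₁, hr₁⟩ := hSne
  have hbdd : BddAbove S := ⟨h, fun ρ hρ => hρ.1.2⟩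
  set R : ℝ := sSup S with hRdef
  have hr₁R : r₁ ≤ R := le_csSup hbdd hr₁
  have hR0 : 0 < R := lt_of_lt_of_le hr₁.1.1 hr₁R
  have hRh : R ≤ h := csSup_le ⟨r₁, hr₁⟩ (fun ρ hρ => hρ.1.2)
  have hU : ∀ r', R < r' → r' ≤ h → φ r' ≤ l' * r' ^ n := by
    intro r' h1 h2
    by_contra hcon
    push_neg at hcon
    have hmem : r' ∈ S := ⟨⟨lt_trans hR0 h1, h2⟩, hcon.le⟩
    exact absurd (le_csSup hbdd hmem) (not_le.2 h1)
  have hUR : φ R ≤ l' * R ^ n := by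
    rcases eq_or_lt_of_le hRh with he | hlt
    · rw [he]
      exact htop
    · have hten : Tendsto (fun ρ : ℝ => l' * ρ ^ n) (𝓝[>] R) (𝓝 (l' * R ^ n)) :=
        ((continuous_const.mul (continuous_pow n)).tendsto R).mono_left nhdsWithin_le_nhds
      refine ge_of_tendsto hten ?_
      filter_upwards [Ioc_mem_nhdsGT_of_mem ⟨le_rfl, hlt⟩] with ρ hρ
      exact le_trans (hφmono R ρ (lt_trans hR0 hρ.1).le hρ.1.le) (hU ρ hρ.1 hρ.2)
  have hLR : l' * R ^ n ≤ φ R := by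
    by_contra hcon
    push_neg at hcon
    have hcont : ContinuousAt (fun ρ : ℝ => l' * ρ ^ n) R :=
      (continuous_const.mul (continuous_pow n)).continuousAt
    have hev : ∀ᶠ ρ in 𝓝 R, φ R < l' * ρ ^ n := hcont.eventually (eventually_gt_nhds hcon)
    rw [Metric.eventually_nhds_iff] at hev
    obtain ⟨δ, hδ0, hδ⟩ := hev
    obtain ⟨ρ, hρS, hρgt⟩ := exists_lt_of_lt_csSup ⟨r₁, hr₁⟩ (by linarith : R - δ/2 < R)
    have hρle : ρ ≤ R := le_csSup hbdd hρS
    have hdist : dist ρ R < δ := by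
      rw [Real.dist_eq, abs_lt]; constructor <;> linarith
    have h1 : φ R < l' * ρ ^ n := hδ hdist
    have h2 : l' * ρ ^ n ≤ φ ρ := hρS.2
    have h3 : φ ρ ≤ φ R := hφmono ρ R hR0.le hρle
    linarith
  refine ⟨R, hR0, hRh, hLR, fun r' h1 h2 => ?_⟩
  rcases eq_or_lt_of_le h1 with he | hlt
  · rw [← he]; exact hUR
  · exact hU r' hlt h2

end Stmt5Aux

end Stmt5Aux

/-- Real-number arithmetic at the heart of Statement 5. -/
lemma stmt5_arith (n : ℕ) {la η h rA rU rW rI : ℝ}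
    (hla0 : 0 < la) (hla1 : la < 1) (hη0 : 0 < η) (hh : 0 < h)
    (hrA : 0 ≤ rA) (hrU : 0 ≤ rU) (hrW : 0 ≤ rW) (hrI : 0 ≤ rI)
    (f1 : rA ≤ 5 ^ n * min (2 * la) ((1 + la) / 2) * rU)
    (f2 : rW + rI = rA)
    (f3 : rI ≤ min (2 * la) ((1 + la) / 2) * rU)
    (f4 : rW + rU ≤ η * h ^ n) :
    rA ≤ 1 / (1 + (1 - la) / (8 * 5 ^ n * la)) * η * h ^ n := by
  set l' : ℝ := min (2 * la) ((1 + la) / 2) with hl'def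
  have h5 : (0:ℝ) < 5 ^ n := by positivity
  have hl'0 : 0 < l' := lt_min (by linarith) (by linarith)
  have hl'1 : l' < 1 := lt_of_le_of_lt (min_le_right _ _) (by linarith)
  have key : l' * (1 - la) ≤ 8 * la * (1 - l') := by
    rcases le_total (2 * la) ((1 + la) / 2) with hc | hc
    · rw [hl'def, min_eq_left hc]; nlinarith
    · rw [hl'def, min_eq_right hc]; nlinarith
  have h8 : (0:ℝ) < 8 * 5 ^ n * la := mul_pos (by positivity) hla0
  have hden : 0 < 1 + (1 - la) / (8 * 5 ^ n * la) := by
    have := div_nonneg (by linarith : (0:ℝ) ≤ 1 - la) h8.le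
    linarith
  have e1 : rA + (1 - l') * rU ≤ η * h ^ n := by nlinarith
  have e2 : (1 - la) / (8 * 5 ^ n * la) * rA ≤ (1 - l') * rU := by
    rw [div_mul_eq_mul_div, div_le_iff₀ h8]
    nlinarith [mul_le_mul_of_nonneg_right key (mul_nonneg h5.le hrU)]
  have e3 : (1 + (1 - la) / (8 * 5 ^ n * la)) * rA ≤ η * h ^ n := by nlinarith
  rw [div_mul_eq_mul_div, div_mul_eq_mul_div, one_mul, le_div_iff₀ hden]
  linarith

/-- comparison of rearrangements, `(f χ_Q)*(γη|Q|) ≤ ((m_λ f) χ_Q)*(η|Q|)`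
with `γ = 1/(1 + (1-λ)/(B_n λ))`. -/
theorem stmt5 (n : ℕ) :
    ∃ B : ℝ, 0 < B ∧
      ∀ f : (Fin n → ℝ) → ℝ, Measurable f →
      ∀ la : ℝ, la ∈ Set.Ioo (0 : ℝ) 1 →
      ∀ η : ℝ, η ∈ Set.Ioo (0 : ℝ) 1 →
      ∀ Q : Set (Fin n → ℝ), IsCube Q →
        rearr (Q.indicator (toE f))
            (ENNReal.ofReal ((1 / (1 + (1 - la) / (B * la))) * η) * volume Q) ≤
          rearr (Q.indicator (mMed la (toE f))) (ENNReal.ofReal η * volume Q) := by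
  classical
  open Stmt5Aux Metric in
  refine ⟨8 * 5 ^ n, by positivity, ?_⟩
  intro f hf la hla η hη Q hQ
  obtain ⟨hla0, hla1⟩ := hla
  obtain ⟨hη0, hη1⟩ := hη
  obtain ⟨a, h, hh, rfl⟩ := hQ
  set fE : (Fin n → ℝ) → ℝ≥0∞ := toE f with hfEdef
  have hfEmeas : Measurable fE := hf.abs.ennreal_ofReal
  set QQ : Set (Fin n → ℝ) := Set.Icc a (fun i => a i + h) with hQQdef
  have hvQ : volume QQ = ENNReal.ofReal (h ^ n) := by
    rw [hQQdef, ← Qc_top a h a, volume_Qc a h a hh.le]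
  have hvQne : volume QQ ≠ ⊤ := by rw [hvQ]; exact ENNReal.ofReal_ne_top
  have hQQmeas : MeasurableSet QQ := measurableSet_Icc
  -- reduce to a superlevel-set estimate
  apply le_of_forall_gt_imp_ge_of_dense
  intro β hβ
  have hβ0 : 0 < β := lt_of_le_of_lt zero_le hβ
  refine sInf_le ⟨hβ0, ?_⟩
  -- pick an intermediate level β''
  obtain ⟨β'', hβ''1, hβ''2⟩ := exists_between hβ
  obtain ⟨α₀, ⟨hα₀0, hα₀v⟩, hα₀β⟩ := sInf_lt_iff.1 hβ''1
  -- the superlevel set of the maximal function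
  set M : Set (Fin n → ℝ) := {y | β'' < mMed la fE y} ∩ QQ with hMdef
  have hMvol : volume M ≤ ENNReal.ofReal (η * h ^ n) := by
    have hsub : M ⊆ {y | α₀ < QQ.indicator (mMed la fE) y} := by
      rintro y ⟨hy1, hy2⟩
      simp only [Set.mem_setOf_eq, Set.indicator_of_mem hy2]
      exact lt_trans hα₀β hy1
    calc volume M ≤ volume {y | α₀ < QQ.indicator (mMed la fE) y} := measure_mono hsub
      _ ≤ ENNReal.ofReal η * volume QQ := hα₀v
      _ = ENNReal.ofReal (η * h ^ n) := by rw [hvQ, ← ENNReal.ofReal_mul hη0.le]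
  -- the superlevel set of f
  set A : Set (Fin n → ℝ) := QQ ∩ {y | β < fE y} with hAdef
  have hAmeas : MeasurableSet A :=
    hQQmeas.inter (measurableSet_lt measurable_const hfEmeas)
  have hAsub : A ⊆ QQ := Set.inter_subset_left
  have hsetEq : {y | β < QQ.indicator fE y} = A := by
    ext y
    by_cases hy : y ∈ QQ
    · simp [hAdef, Set.indicator_of_mem hy, hy]
    · simp [hAdef, Set.indicator_of_notMem hy, hy, (zero_le (a := β)).not_gt]
  rw [hsetEq, hvQ]
  -- high-density cubes are contained in M
  have hcube : ∀ (z : Fin n → ℝ) (ρ : ℝ), 0 < ρ → ρ ≤ h →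
      ENNReal.ofReal (la * ρ ^ n) < volume (A ∩ Qc a h z ρ) → Qc a h z ρ ⊆ M := by
    intro z ρ hρ0 hρh hlt y hy
    have hyQQ : y ∈ QQ := Qc_subset_Icc hρh hy
    refine ⟨?_, hyQQ⟩
    have h1 : rearr ((Qc a h z ρ).indicator fE) (ENNReal.ofReal la * volume (Qc a h z ρ)) ≤
        mMed la fE y := le_mMed (isCube_Qc a h z hρ0) hy
    have h2 : β ≤ rearr ((Qc a h z ρ).indicator fE) (ENNReal.ofReal la * volume (Qc a h z ρ)) := by
      refine le_sInf ?_
      rintro α ⟨hα0, hαv⟩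
      by_contra hcon
      push_neg at hcon
      have hsub2 : A ∩ Qc a h z ρ ⊆ {y | α < (Qc a h z ρ).indicator fE y} := by
        rintro w ⟨⟨hwQ, hwf⟩, hwc⟩
        simp only [Set.mem_setOf_eq, Set.indicator_of_mem hwc]
        exact lt_trans hcon hwf
      have : volume (A ∩ Qc a h z ρ) ≤ ENNReal.ofReal (la * ρ ^ n) := by
        calc volume (A ∩ Qc a h z ρ) ≤ volume {y | α < (Qc a h z ρ).indicator fE y} :=
              measure_mono hsub2
          _ ≤ ENNReal.ofReal la * volume (Qc a h z ρ) := hαv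
          _ = ENNReal.ofReal (la * ρ ^ n) := by
              rw [volume_Qc a h z hρ0.le, ← ENNReal.ofReal_mul hla0.le]
      exact absurd this (not_le.2 hlt)
    exact lt_of_lt_of_le hβ''2 (le_trans h2 h1)
  -- the total measure of A is at most la * |Q|
  have hAla : volume A ≤ ENNReal.ofReal (la * h ^ n) := by
    by_contra hc
    push_neg at hc
    have haQ : a ∈ QQ := ⟨le_rfl, fun i => by show a i ≤ a i + h; linarith⟩
    have hQM : QQ ⊆ M := by
      have := hcube a h hh le_rfl (by
        rwa [Qc_top a h a, ← hQQdef, Set.inter_eq_self_of_subset_left hAsub])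
      rwa [Qc_top a h a, ← hQQdef] at this
    have h1 : volume QQ ≤ volume M := measure_mono hQM
    have h2 : volume M < volume QQ := by
      refine lt_of_le_of_lt hMvol ?_
      rw [hvQ]
      exact ENNReal.ofReal_lt_ofReal_iff (by positivity) |>.2 (by nlinarith [pow_pos hh n])
    exact absurd h1 (not_le.2 h2)
  -- parameters
  set l' : ℝ := min (2 * la) ((1 + la) / 2) with hl'def
  have hl'0 : 0 < l' := lt_min (by linarith) (by linarith)
  have hl'1 : l' < 1 := lt_of_le_of_lt (min_le_right _ _) (by linarith)
  have hlal' : la < l' := lt_min (by linarith) (by linarith)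
  -- trivial case
  rcases eq_or_ne (volume A) 0 with hA0 | hA0
  · rw [hA0]; exact zero_le
  -- almost every point of A is a density point
  have hae := Besicovitch.ae_tendsto_measure_inter_div volume A
  set D : Set (Fin n → ℝ) := {x | Tendsto (fun ρ : ℝ =>
      volume (A ∩ closedBall x ρ) / volume (closedBall x ρ)) (𝓝[>] (0:ℝ)) (𝓝 1)} with hDdef
  have hDc : volume (Dᶜ ∩ A) = 0 := by
    have := ae_iff.1 hae
    rwa [Measure.restrict_apply' hAmeas] at this
  set N : Set (Fin n → ℝ) := toMeasurable volume (Dᶜ ∩ A) with hNdef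
  have hN0 : volume N = 0 := by rw [hNdef, measure_toMeasurable]; exact hDc
  set A' : Set (Fin n → ℝ) := A \ N with hA'def
  have hA'meas : MeasurableSet A' := hAmeas.diff (measurableSet_toMeasurable _ _)
  have hA'vol : volume A' = volume A := measure_diff_null hN0
  have hA'A : A' ⊆ A := Set.diff_subset
  have hA'D : ∀ x ∈ A', x ∈ D := by
    intro x hx
    by_contra hc
    exact hx.2 (subset_toMeasurable _ _ ⟨hc, hx.1⟩)
  -- stopping radii
  have hex : ∀ x ∈ A', ∃ r : ℝ, 0 < r ∧ r ≤ h ∧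
      l' * r ^ n ≤ (volume (A ∩ Qc a h x r)).toReal ∧
      ∀ r', r ≤ r' → r' ≤ h → (volume (A ∩ Qc a h x r')).toReal ≤ l' * r' ^ n := by
    intro x hx
    have hxQ : x ∈ QQ := hAsub (hA'A hx)
    refine exists_stopping hh hxQ hl'0 hl'1 ?_ (hA'D x hx)
    rw [Qc_top a h x, ← hQQdef, Set.inter_eq_self_of_subset_left hAsub]
    have h1 : (volume A).toReal ≤ la * h ^ n :=
      ENNReal.toReal_le_of_le_ofReal (mul_nonneg hla0.le (by positivity)) hAla
    nlinarith [pow_pos hh n]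
  choose! r hr using hex
  -- Vitali covering argument
  obtain ⟨u, hu_sub, hu_disj, hu_cov⟩ :=
    Vitali.exists_disjoint_subfamily_covering_enlargement
      (fun z => Qc a h z (r z)) A' r 2 one_lt_two
      (fun z hz => (hr z hz).1.le) h (fun z hz => (hr z hz).2.1)
      (fun z hz => ⟨z, mem_Qc_self (hAsub (hA'A hz)) (hr z hz).1.le⟩)
  have hu_cnt : u.Countable := by
    rw [← Set.countable_coe_iff]
    have hcnt := MeasureTheory.Measure.countable_meas_pos_of_disjoint_iUnion
      (μ := (volume : Measure (Fin n → ℝ)))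
      (As := fun b : u => Qc a h (b : Fin n → ℝ) (r b))
      (fun b => measurableSet_Qc _ _ _ _)
      (fun i j hij => hu_disj i.2 j.2 (fun hcc => hij (Subtype.ext hcc)))
    have : {i : u | 0 < volume (Qc a h (i : Fin n → ℝ) (r i))} = Set.univ := by
      ext b
      simp only [Set.mem_setOf_eq, Set.mem_univ, iff_true]
      rw [volume_Qc a h _ (hr b (hu_sub b.2)).1.le]
      exact ENNReal.ofReal_pos.2 (pow_pos (hr b (hu_sub b.2)).1 n)
    rw [this, Set.countable_univ_iff] at hcnt
    exact hcnt
  set U : Set (Fin n → ℝ) := ⋃ z ∈ u, Qc a h z (r z) with hUdef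
  have hUmeas : MeasurableSet U :=
    MeasurableSet.biUnion hu_cnt (fun b _ => measurableSet_Qc _ _ _ _)
  have hUvol : volume U = ∑' b : u, volume (Qc a h (b : Fin n → ℝ) (r b)) :=
    measure_biUnion hu_cnt hu_disj (fun b _ => measurableSet_Qc _ _ _ _)
  have hUQQ : U ⊆ QQ := by
    refine Set.iUnion₂_subset fun z hz => Qc_subset_Icc (hr z (hu_sub hz)).2.1
  have hUfin : volume U ≠ ⊤ := by
    refine ne_top_of_le_ne_top hvQne (measure_mono hUQQ)
  -- each chosen cube sits inside M
  have hlow : ∀ z ∈ A', ENNReal.ofReal (la * (r z) ^ n) < volume (A ∩ Qc a h z (r z)) := by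
    intro z hz
    have h1 := (hr z hz).2.2.1
    have hfin : volume (A ∩ Qc a h z (r z)) ≠ ⊤ :=
      ne_top_of_le_ne_top (by rw [volume_Qc a h z (hr z hz).1.le]; exact ENNReal.ofReal_ne_top)
        (measure_mono Set.inter_subset_right)
    have h2 : ENNReal.ofReal (l' * (r z) ^ n) ≤ volume (A ∩ Qc a h z (r z)) := by
      rw [← ENNReal.ofReal_toReal hfin]
      exact ENNReal.ofReal_le_ofReal h1
    refine lt_of_lt_of_le ?_ h2
    exact ENNReal.ofReal_lt_ofReal_iff (mul_pos hl'0 (pow_pos (hr z hz).1 n)) |>.2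
      (by nlinarith [pow_pos (hr z hz).1 n])
  have hUM : U ⊆ M :=
    Set.iUnion₂_subset fun z hz =>
      hcube z (r z) (hr z (hu_sub hz)).1 (hr z (hu_sub hz)).2.1 (hlow z (hu_sub hz))
  have hA'M : A' ⊆ M := fun z hz =>
    hcube z (r z) (hr z hz).1 (hr z hz).2.1 (hlow z hz)
      (mem_Qc_self (hAsub (hA'A hz)) (hr z hz).1.le)
  -- enlarged cubes cover A'
  have hcov : A' ⊆ ⋃ b ∈ u, (A ∩ Qc a h b (min (5 * r b) h)) := by
    intro y hy
    obtain ⟨b, hb, hne, hle⟩ := hu_cov y hy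
    have hbA' := hu_sub hb
    have hyQ : y ∈ Qc a h b (min (5 * r b) h) :=
      Qc_enlarge (hAsub (hA'A hbA')) (hr b hbA').1 (hr b hbA').2.1 (hr y hy).2.1 hle hne
        (mem_Qc_self (hAsub (hA'A hy)) (hr y hy).1.le)
    exact Set.mem_biUnion hb ⟨hA'A hy, hyQ⟩
  -- per-cube measure bounds
  have hfinb : ∀ (z : Fin n → ℝ) (ρ : ℝ), 0 ≤ ρ → volume (A ∩ Qc a h z ρ) ≠ ⊤ := by
    intro z ρ hρ
    exact ne_top_of_le_ne_top (by rw [volume_Qc a h z hρ]; exact ENNReal.ofReal_ne_top)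
      (measure_mono Set.inter_subset_right)
  have hb1 : ∀ b ∈ u, volume (A ∩ Qc a h b (r b)) ≤
      ENNReal.ofReal l' * volume (Qc a h b (r b)) := by
    intro b hb
    have hbA' := hu_sub hb
    have := (hr b hbA').2.2.2 (r b) le_rfl (hr b hbA').2.1
    rw [volume_Qc a h b (hr b hbA').1.le, ← ENNReal.ofReal_mul hl'0.le]
    exact (ENNReal.le_ofReal_iff_toReal_le (hfinb b (r b) (hr b hbA').1.le)
      (mul_nonneg hl'0.le (pow_nonneg (hr b hbA').1.le n))).2 this
  have hb2 : ∀ b ∈ u, volume (A ∩ Qc a h b (min (5 * r b) h)) ≤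
      ENNReal.ofReal (5 ^ n * l') * volume (Qc a h b (r b)) := by
    intro b hb
    have hbA' := hu_sub hb
    have hrb0 := (hr b hbA').1
    have hminpos : 0 ≤ min (5 * r b) h := le_min (by linarith) hh.le
    have hup := (hr b hbA').2.2.2 (min (5 * r b) h)
      (le_min (by linarith) (hr b hbA').2.1) (min_le_right _ _)
    have hpow : (min (5 * r b) h) ^ n ≤ 5 ^ n * (r b) ^ n := by
      rw [← mul_pow]
      exact pow_le_pow_left₀ hminpos (min_le_left _ _) n
    rw [volume_Qc a h b hrb0.le, ← ENNReal.ofReal_mul (mul_nonneg (by positivity) hl'0.le)]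
    refine (ENNReal.le_ofReal_iff_toReal_le (hfinb b _ hminpos)
      (mul_nonneg (mul_nonneg (by positivity) hl'0.le) (pow_nonneg hrb0.le n))).2 ?_
    calc (volume (A ∩ Qc a h b (min (5 * r b) h))).toReal ≤ l' * (min (5 * r b) h) ^ n := hup
      _ ≤ 5 ^ n * l' * (r b) ^ n := by nlinarith
  -- summed bounds
  have hsum1 : volume A ≤ ENNReal.ofReal (5 ^ n * l') * volume U := by
    calc volume A = volume A' := hA'vol.symm
      _ ≤ volume (⋃ b ∈ u, (A ∩ Qc a h b (min (5 * r b) h))) := measure_mono hcov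
      _ ≤ ∑' b : u, volume (A ∩ Qc a h (b : Fin n → ℝ) (min (5 * r b) h)) :=
          measure_biUnion_le volume hu_cnt _
      _ ≤ ∑' b : u, ENNReal.ofReal (5 ^ n * l') * volume (Qc a h (b : Fin n → ℝ) (r b)) :=
          ENNReal.tsum_le_tsum (fun b => hb2 b b.2)
      _ = ENNReal.ofReal (5 ^ n * l') * ∑' b : u, volume (Qc a h (b : Fin n → ℝ) (r b)) :=
          ENNReal.tsum_mul_left
      _ = ENNReal.ofReal (5 ^ n * l') * volume U := by rw [hUvol]
  have hsum2 : volume (A' ∩ U) ≤ ENNReal.ofReal l' * volume U := by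
    have hsub : A' ∩ U ⊆ ⋃ b ∈ u, (A ∩ Qc a h b (r b)) := by
      rintro y ⟨hy1, hy2⟩
      obtain ⟨b, hb, hyb⟩ := Set.mem_iUnion₂.1 hy2
      exact Set.mem_biUnion hb ⟨hA'A hy1, hyb⟩
    calc volume (A' ∩ U) ≤ volume (⋃ b ∈ u, (A ∩ Qc a h b (r b))) := measure_mono hsub
      _ ≤ ∑' b : u, volume (A ∩ Qc a h (b : Fin n → ℝ) (r b)) := measure_biUnion_le volume hu_cnt _
      _ ≤ ∑' b : u, ENNReal.ofReal l' * volume (Qc a h (b : Fin n → ℝ) (r b)) :=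
          ENNReal.tsum_le_tsum (fun b => hb1 b b.2)
      _ = ENNReal.ofReal l' * ∑' b : u, volume (Qc a h (b : Fin n → ℝ) (r b)) :=
          ENNReal.tsum_mul_left
      _ = ENNReal.ofReal l' * volume U := by rw [hUvol]
  have hkey : volume (A' \ U) + volume U ≤ ENNReal.ofReal (η * h ^ n) := by
    have hsub : (A' \ U) ∪ U ⊆ M :=
      Set.union_subset (fun y hy => hA'M hy.1) hUM
    calc volume (A' \ U) + volume U = volume ((A' \ U) ∪ U) :=
          (measure_union (disjoint_sdiff_left) hUmeas).symm
      _ ≤ volume M := measure_mono hsub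
      _ ≤ ENNReal.ofReal (η * h ^ n) := hMvol
  have hsplit : volume (A' \ U) + volume (A' ∩ U) = volume A' :=
    measure_diff_add_inter A' hUmeas
  -- pass to real numbers
  have hAfin : volume A ≠ ⊤ := ne_top_of_le_ne_top hvQne (measure_mono hAsub)
  have hWfin : volume (A' \ U) ≠ ⊤ :=
    ne_top_of_le_ne_top hAfin (by rw [← hA'vol]; exact measure_mono Set.diff_subset)
  have hIfin : volume (A' ∩ U) ≠ ⊤ :=
    ne_top_of_le_ne_top hAfin (by rw [← hA'vol]; exact measure_mono Set.inter_subset_left)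
  set rA : ℝ := (volume A).toReal with hrAdef
  set rU : ℝ := (volume U).toReal with hrUdef
  set rW : ℝ := (volume (A' \ U)).toReal with hrWdef
  set rI : ℝ := (volume (A' ∩ U)).toReal with hrIdef
  have f1 : rA ≤ 5 ^ n * l' * rU := by
    have := ENNReal.toReal_mono (by
        exact ENNReal.mul_ne_top ENNReal.ofReal_ne_top hUfin) hsum1
    rwa [ENNReal.toReal_mul, ENNReal.toReal_ofReal (mul_nonneg (by positivity) hl'0.le)] at this
  have f2 : rW + rI = rA := by
    rw [hrWdef, hrIdef, hrAdef, ← hA'vol, ← ENNReal.toReal_add hWfin hIfin, hsplit]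
  have f3 : rI ≤ l' * rU := by
    have := ENNReal.toReal_mono (ENNReal.mul_ne_top ENNReal.ofReal_ne_top hUfin) hsum2
    rwa [ENNReal.toReal_mul, ENNReal.toReal_ofReal hl'0.le] at this
  have f4 : rW + rU ≤ η * h ^ n := by
    have := ENNReal.toReal_mono ENNReal.ofReal_ne_top hkey
    rwa [ENNReal.toReal_add hWfin hUfin,
      ENNReal.toReal_ofReal (mul_nonneg hη0.le (by positivity))] at this
  have hfinal : rA ≤ 1 / (1 + (1 - la) / (8 * 5 ^ n * la)) * η * h ^ n :=
    stmt5_arith n hla0 hla1 hη0 hh ENNReal.toReal_nonneg ENNReal.toReal_nonneg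
      ENNReal.toReal_nonneg ENNReal.toReal_nonneg f1 f2 f3 f4
  have h8 : (0:ℝ) < 8 * 5 ^ n * la := mul_pos (by positivity) hla0
  have hγden : (0:ℝ) < 1 + (1 - la) / (8 * 5 ^ n * la) := by
    have := div_nonneg (by linarith : (0:ℝ) ≤ 1 - la) h8.le
    linarith
  have hγ0 : 0 ≤ 1 / (1 + (1 - la) / (8 * 5 ^ n * la)) := (one_div_pos.2 hγden).le
  calc volume A = ENNReal.ofReal rA := (ENNReal.ofReal_toReal hAfin).symm
    _ ≤ ENNReal.ofReal (1 / (1 + (1 - la) / (8 * 5 ^ n * la)) * η * h ^ n) :=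
        ENNReal.ofReal_le_ofReal hfinal
    _ = ENNReal.ofReal (1 / (1 + (1 - la) / (8 * 5 ^ n * la)) * η) * ENNReal.ofReal (h ^ n) := by
        rw [← ENNReal.ofReal_mul (mul_nonneg hγ0 hη0.le)]
end

section
/- For every λ ∈ (0,1) there exists a constant γ = γ(n,λ) ∈ (0,1) (one may take γ = 1/(1 + (1-λ)/(B_n λ)) with B_n depending only on n) such that for every η ∈ (0,1), every measurable function f on ℝⁿ, and every x ∈ ℝⁿ, one has m_{γη} f(x) ≤ m_η(m_λ f)(x). -/
open MeasureTheory Set Filter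
open scoped ENNReal Topology

section Aux
open Metric
variable {n : ℕ}

lemma cball_eq_Icc (x : Fin n → ℝ) {r : ℝ} (hr : 0 ≤ r) :
    closedBall x r = Set.Icc (fun i => x i - r) (fun i => x i + r) := by
  rw [closedBall_pi x hr, ← Set.pi_univ_Icc]
  exact Set.pi_congr rfl fun i _ => Real.closedBall_eq_Icc

lemma vol_cball (x : Fin n → ℝ) {r : ℝ} (hr : 0 ≤ r) :
    volume (closedBall x r) = ENNReal.ofReal (2*r) ^ n := by
  rw [cball_eq_Icc x hr, ← Set.pi_univ_Icc, volume_pi_pi]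
  have : ∀ i : Fin n, volume (Icc (x i - r) (x i + r)) = ENNReal.ofReal (2*r) := by
    intro i; rw [Real.volume_Icc]; congr 1; ring
  simp only [this, Finset.prod_const, Finset.card_univ, Fintype.card_fin]

lemma Icc_eq_cball (a : Fin n → ℝ) {h : ℝ} (hh : 0 ≤ h) :
    Set.Icc a (fun i => a i + h) = closedBall (fun i => a i + h/2) (h/2) := by
  rw [cball_eq_Icc _ (by linarith)]
  have h1 : (fun i => (a i + h/2) - h/2) = a := funext fun i => by ring
  have h2 : (fun i => (a i + h/2) + h/2) = (fun i => a i + h) := funext fun i => by ring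
  rw [h1, h2]

lemma vol_Icc (a : Fin n → ℝ) {h : ℝ} (hh : 0 ≤ h) :
    volume (Set.Icc a (fun i => a i + h)) = ENNReal.ofReal h ^ n := by
  rw [Icc_eq_cball a hh, vol_cball _ (by linarith)]
  congr 2
  ring

lemma isCube_cball (x : Fin n → ℝ) {r : ℝ} (hr : 0 < r) : IsCube (closedBall x r) := by
  refine ⟨fun i => x i - r, 2*r, by linarith, ?_⟩
  rw [cball_eq_Icc x hr.le]
  have h2 : (fun i => (x i - r) + 2*r) = (fun i => x i + r) := funext fun i => by ring
  rw [h2]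

end Aux

section Clamp
open Metric
variable {n : ℕ}

noncomputable def ctr {n : ℕ} (a : Fin n → ℝ) (h : ℝ) (y : Fin n → ℝ) (ρ : ℝ) : Fin n → ℝ :=
  fun i => max (a i + ρ) (min (y i) (a i + h - ρ))

lemma rclamp1 {A Y Z ρ h : ℝ} (hAZ : A ≤ Z) (hZ : Z ≤ A + h) (hZY : |Z - Y| ≤ ρ) :
    max (A + ρ) (min Y (A + h - ρ)) - ρ ≤ Z ∧ Z ≤ max (A + ρ) (min Y (A + h - ρ)) + ρ := by
  rw [abs_le] at hZY
  constructor
  · have h1 : min Y (A + h - ρ) ≤ Y := min_le_left _ _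
    have h2 : max (A + ρ) (min Y (A + h - ρ)) ≤ Z + ρ := max_le (by linarith) (by linarith)
    linarith
  · have h1 : Z - ρ ≤ min Y (A + h - ρ) := le_min (by linarith) (by linarith)
    have h2 := h1.trans (le_max_right (A + ρ) _)
    linarith

lemma rclamp3 {A Y ρ ρ' h : ℝ} (hρρ' : ρ ≤ ρ') :
    max (A+ρ') (min Y (A+h-ρ')) - ρ' ≤ max (A+ρ) (min Y (A+h-ρ)) - ρ ∧
    max (A+ρ) (min Y (A+h-ρ)) + ρ ≤ max (A+ρ') (min Y (A+h-ρ')) + ρ' := by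
  constructor
  · have h1 : A + ρ' ≤ (max (A+ρ) (min Y (A+h-ρ))) + (ρ' - ρ) := by
      have := le_max_left (A+ρ) (min Y (A+h-ρ)); linarith
    have h2 : min Y (A+h-ρ') ≤ (max (A+ρ) (min Y (A+h-ρ))) + (ρ' - ρ) := by
      have c1 : min Y (A+h-ρ') ≤ min Y (A+h-ρ) := min_le_min le_rfl (by linarith)
      have := le_max_right (A+ρ) (min Y (A+h-ρ)); linarith
    have := max_le h1 h2; linarith
  · have h1 : A + ρ ≤ (max (A+ρ') (min Y (A+h-ρ'))) + (ρ' - ρ) := by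
      have := le_max_left (A+ρ') (min Y (A+h-ρ')); linarith
    have h2 : min Y (A+h-ρ) ≤ (max (A+ρ') (min Y (A+h-ρ'))) + (ρ' - ρ) := by
      rcases le_total Y (A+h-ρ') with hc | hc
      · have c1 : min Y (A+h-ρ) ≤ Y := min_le_left _ _
        have c2 : Y ≤ max (A+ρ') (min Y (A+h-ρ')) := calc
          Y = min Y (A+h-ρ') := (min_eq_left hc).symm
          _ ≤ _ := le_max_right _ _
        linarith
      · have c1 : min Y (A+h-ρ) ≤ A + h - ρ := min_le_right _ _
        have c2 : A + h - ρ' ≤ max (A+ρ') (min Y (A+h-ρ')) := calc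
          A + h - ρ' = min Y (A+h-ρ') := (min_eq_right hc).symm
          _ ≤ _ := le_max_right _ _
        linarith
    have := max_le h1 h2; linarith

lemma mem_cball_ctr {a y : Fin n → ℝ} {h ρ : ℝ} (hρ : 0 ≤ ρ)
    (hy : y ∈ Set.Icc a (fun i => a i + h)) : y ∈ closedBall (ctr a h y ρ) ρ := by
  rw [cball_eq_Icc _ hρ, Set.mem_Icc]
  rw [Set.mem_Icc] at hy
  constructor <;> intro i
  · exact (rclamp1 (hy.1 i) (hy.2 i) (by simpa using hρ)).1
  · exact (rclamp1 (hy.1 i) (hy.2 i) (by simpa using hρ)).2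

lemma cball_ctr_subset {a y : Fin n → ℝ} {h ρ : ℝ} (hρ : 0 ≤ ρ) (hρh : 2*ρ ≤ h) :
    closedBall (ctr a h y ρ) ρ ⊆ Set.Icc a (fun i => a i + h) := by
  rw [cball_eq_Icc _ hρ]
  apply Set.Icc_subset_Icc <;> intro i <;> simp only [ctr]
  · have := le_max_left (a i + ρ) (min (y i) (a i + h - ρ)); linarith
  · have := max_le (show a i + ρ ≤ a i + h - ρ by linarith)
      (min_le_right (y i) (a i + h - ρ))
    linarith

lemma cball_ctr_mono {a y : Fin n → ℝ} {h ρ ρ' : ℝ} (hρ : 0 ≤ ρ) (hρρ' : ρ ≤ ρ') :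
    closedBall (ctr a h y ρ) ρ ⊆ closedBall (ctr a h y ρ') ρ' := by
  rw [cball_eq_Icc _ hρ, cball_eq_Icc _ (hρ.trans hρρ')]
  apply Set.Icc_subset_Icc <;> intro i <;> simp only [ctr]
  · exact (rclamp3 hρρ').1
  · exact (rclamp3 hρρ').2

lemma mem_cball_ctr_of_mem {a y z : Fin n → ℝ} {h ρ : ℝ} (hρ : 0 ≤ ρ)
    (hz : z ∈ Set.Icc a (fun i => a i + h)) (hzy : z ∈ closedBall y ρ) :
    z ∈ closedBall (ctr a h y ρ) ρ := by
  rw [cball_eq_Icc _ hρ, Set.mem_Icc]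
  rw [cball_eq_Icc _ hρ, Set.mem_Icc] at hzy
  rw [Set.mem_Icc] at hz
  have habs : ∀ i, |z i - y i| ≤ ρ := by
    intro i
    rw [abs_le]
    exact ⟨by have := hzy.1 i; simp at this ⊢; linarith,
           by have := hzy.2 i; simp at this ⊢; linarith⟩
  exact ⟨fun i => (rclamp1 (hz.1 i) (hz.2 i) (habs i)).1,
         fun i => (rclamp1 (hz.1 i) (hz.2 i) (habs i)).2⟩

lemma ctr_top {a : Fin n → ℝ} {h : ℝ} (y : Fin n → ℝ) :
    ctr a h y (h/2) = fun i => a i + h/2 := by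
  funext i
  simp only [ctr]
  exact max_eq_left ((min_le_right _ _).trans (by linarith))

lemma cball_ctr_top {a : Fin n → ℝ} {h : ℝ} (hh : 0 ≤ h) (y : Fin n → ℝ) :
    closedBall (ctr a h y (h/2)) (h/2) = Set.Icc a (fun i => a i + h) := by
  rw [ctr_top, ← Icc_eq_cball a hh]

end Clamp

section RearrHelpers
variable {n : ℕ}

lemma le_mMed {la : ℝ} {f : (Fin n → ℝ) → ℝ≥0∞} {x : Fin n → ℝ}
    {Q : Set (Fin n → ℝ)} (hQ : IsCube Q) (hx : x ∈ Q) :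
    rearr (Q.indicator f) (ENNReal.ofReal la * volume Q) ≤ mMed la f x := by
  unfold mMed
  refine le_iSup_of_le Q ?_
  refine le_iSup_of_le hQ ?_
  exact le_iSup_of_le hx le_rfl

lemma rearr_ball_ge {la : ℝ} {g : (Fin n → ℝ) → ℝ≥0∞}
    {S : Set (Fin n → ℝ)} {β' : ℝ≥0∞}
    (hbig : ENNReal.ofReal la * volume S < volume ({y | β' < g y} ∩ S)) :
    β' ≤ rearr (S.indicator g) (ENNReal.ofReal la * volume S) := by
  refine le_sInf fun α' hα' => ?_
  by_contra hcon
  push_neg at hcon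
  have hsub : {y | β' < g y} ∩ S ⊆ {y | α' < S.indicator g y} := by
    rintro y ⟨hy1, hy2⟩
    simp only [Set.mem_setOf_eq] at hy1 ⊢
    rw [Set.indicator_of_mem hy2]
    exact lt_trans hcon hy1
  exact absurd hα'.2 (not_le.2 (lt_of_lt_of_le hbig (measure_mono hsub)))

end RearrHelpers

section Core
open Metric

lemma core_lemma {n : ℕ} {la : ℝ} (hla : la ∈ Set.Ioo (0:ℝ) 1)
    (a : Fin n → ℝ) {h : ℝ} (hh : 0 < h)
    (E G : Set (Fin n → ℝ)) (hEm : MeasurableSet E)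
    (hEQ : E ⊆ Set.Icc a (fun i => a i + h))
    (hE : volume E ≤ ENNReal.ofReal ((1+la)/2) * volume (Set.Icc a (fun i => a i + h)))
    (hP : ∀ (c : Fin n → ℝ) (ρ : ℝ), 0 < ρ →
      closedBall c ρ ⊆ Set.Icc a (fun i => a i + h) →
      ENNReal.ofReal la * volume (closedBall c ρ) < volume (E ∩ closedBall c ρ) →
      closedBall c ρ ⊆ G) :
    volume E ≤ ENNReal.ofReal ((4:ℝ)^n / ((4:ℝ)^n + (1-la)/2)) * volume G := by
  obtain ⟨hla0, hla1⟩ := hla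
  set Q : Set (Fin n → ℝ) := Set.Icc a (fun i => a i + h) with hQdef
  have hQvol : volume Q = ENNReal.ofReal h ^ n := vol_Icc a hh.le
  have hQne : volume Q ≠ ⊤ := by
    rw [hQvol]; exact ENNReal.pow_ne_top ENNReal.ofReal_ne_top
  -- trivial case
  rcases eq_or_ne (volume E) 0 with hE0 | hE0
  · rw [hE0]; exact zero_le
  -- the case n = 0 is impossible
  rcases Nat.eq_zero_or_pos n with hn | hn
  · exfalso
    subst hn
    obtain ⟨y, hy⟩ := nonempty_of_measure_ne_zero hE0
    have hEuniv : E = Set.univ := Set.eq_univ_of_forall fun z => (Subsingleton.elim z y) ▸ hy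
    have hQE : volume Q ≤ volume E := measure_mono (hEuniv ▸ Set.subset_univ Q)
    rw [hQvol] at hQE hE
    simp only [pow_zero, mul_one] at hQE hE
    have : (1:ℝ≥0∞) ≤ ENNReal.ofReal ((1+la)/2) := le_trans hQE hE
    have hlt : ENNReal.ofReal ((1+la)/2) < 1 := ENNReal.ofReal_lt_one.2 (by linarith)
    exact absurd this (not_le.2 hlt)
  have hn0 : n ≠ 0 := hn.ne'
  -- density points
  have hdens := Besicovitch.ae_tendsto_measure_inter_div (volume : Measure (Fin n → ℝ)) E
  rw [ae_iff] at hdens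
  rw [Measure.restrict_apply' hEm] at hdens
  set Bad : Set (Fin n → ℝ) :=
    {y | ¬ Tendsto (fun r => volume (E ∩ closedBall y r) / volume (closedBall y r))
        (𝓝[>] (0:ℝ)) (𝓝 1)} with hBaddef
  set E' : Set (Fin n → ℝ) := E \ (Bad ∩ E) with hE'def
  have hE'vol : volume E' = volume E := measure_diff_null hdens
  have hE'E : E' ⊆ E := Set.diff_subset
  -- stopping radii
  have key : ∀ y ∈ E', ∃ ρ : ℝ, 0 < ρ ∧ ρ ≤ h/2 ∧
      volume (E ∩ closedBall (ctr a h y ρ) ρ) ≤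
        ENNReal.ofReal ((1+la)/2) * volume (closedBall (ctr a h y ρ) ρ) ∧
      ENNReal.ofReal la * volume (closedBall (ctr a h y ρ) ρ) <
        volume (E ∩ closedBall (ctr a h y ρ) ρ) := by
    intro y hyE'
    have hyE : y ∈ E := hE'E hyE'
    have htd : Tendsto (fun r => volume (E ∩ closedBall y r) / volume (closedBall y r))
        (𝓝[>] (0:ℝ)) (𝓝 1) := by
      by_contra hbad
      exact hyE'.2 ⟨hbad, hyE⟩
    have hlam2lt1 : ENNReal.ofReal ((1+la)/2) < 1 := ENNReal.ofReal_lt_one.2 (by linarith)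
    have hev : (fun r => volume (E ∩ closedBall y r) / volume (closedBall y r)) ⁻¹'
        (Set.Ioi (ENNReal.ofReal ((1+la)/2))) ∈ 𝓝[>] (0:ℝ) :=
      htd (Ioi_mem_nhds hlam2lt1)
    obtain ⟨r₀, hr₀mem, hr₀sub⟩ := mem_nhdsGT_iff_exists_Ioo_subset.1 hev
    rw [Set.mem_Ioi] at hr₀mem
    have hgood : ∀ ρ : ℝ, 0 < ρ → ρ < r₀ →
        ENNReal.ofReal ((1+la)/2) * volume (closedBall y ρ) <
          volume (E ∩ closedBall y ρ) := by
      intro ρ h1 h2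
      have hmem := hr₀sub ⟨h1, h2⟩
      simp only [Set.mem_preimage, Set.mem_Ioi] at hmem
      have hb0 : volume (closedBall y ρ) ≠ 0 := by
        rw [vol_cball y h1.le]
        exact pow_ne_zero _ (ENNReal.ofReal_pos.2 (by linarith)).ne'
      have hbt : volume (closedBall y ρ) ≠ ⊤ := by
        rw [vol_cball y h1.le]; exact ENNReal.pow_ne_top ENNReal.ofReal_ne_top
      exact (ENNReal.lt_div_iff_mul_lt (Or.inl hb0) (Or.inl hbt)).1 hmem
    set St : Set ℝ := {ρ : ℝ | 0 < ρ ∧ ρ ≤ h/2 ∧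
      volume (E ∩ closedBall (ctr a h y ρ) ρ) ≤
        ENNReal.ofReal ((1+la)/2) * volume (closedBall (ctr a h y ρ) ρ)} with hStdef
    have hhalf : h/2 ∈ St := by
      refine ⟨by linarith, le_rfl, ?_⟩
      rw [cball_ctr_top hh.le y]
      calc volume (E ∩ Q) ≤ volume E := measure_mono Set.inter_subset_left
        _ ≤ _ := hE
    have hbdd : BddBelow St := ⟨0, fun ρ hρ => hρ.1.le⟩
    have hSne : St.Nonempty := ⟨h/2, hhalf⟩
    have hlb : ∀ ρ ∈ St, r₀ ≤ ρ := by
      intro ρ hρ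
      by_contra hcon
      push_neg at hcon
      have h1 := hgood ρ hρ.1 hcon
      have h2 : E ∩ closedBall y ρ ⊆ E ∩ closedBall (ctr a h y ρ) ρ := by
        rintro z ⟨hz1, hz2⟩
        exact ⟨hz1, mem_cball_ctr_of_mem hρ.1.le (hEQ hz1) hz2⟩
      have h3 : volume (closedBall y ρ) = volume (closedBall (ctr a h y ρ) ρ) := by
        rw [vol_cball y hρ.1.le, vol_cball _ hρ.1.le]
      have h4 := lt_of_lt_of_le h1 (measure_mono h2)
      rw [h3] at h4
      exact absurd hρ.2.2 (not_le.2 h4)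
    have hρstar_pos : 0 < sInf St := lt_of_lt_of_le hr₀mem (le_csInf hSne hlb)
    have hκ0 : (0:ℝ) < 2*la/(1+la) := by positivity
    have hκ1 : 2*la/(1+la) < 1 := by rw [div_lt_one (by linarith)]; linarith
    set δ : ℝ := (2*la/(1+la)) ^ ((n:ℝ)⁻¹) with hδdef
    have hδ0 : 0 < δ := Real.rpow_pos_of_pos hκ0 _
    have hnpos : (0:ℝ) < (n:ℝ) := Nat.cast_pos.2 hn
    have hδ1 : δ < 1 := Real.rpow_lt_one hκ0.le hκ1 (by positivity)
    have hδn : δ ^ n = 2*la/(1+la) := Real.rpow_inv_natCast_pow hκ0.le hn0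
    obtain ⟨ρ, hρSt, hρlt⟩ : ∃ ρ ∈ St, ρ < sInf St / δ := by
      refine (csInf_lt_iff hbdd hSne).1 ?_
      rw [lt_div_iff₀ hδ0]
      nlinarith
    obtain ⟨hρpos, hρle, hρup'⟩ := hρSt
    have hρ'pos : 0 < δ * ρ := mul_pos hδ0 hρpos
    have hρ'ltρ : δ * ρ < ρ := by nlinarith
    have hρ'lt : δ * ρ < sInf St := by
      calc δ * ρ < δ * (sInf St / δ) := by exact mul_lt_mul_of_pos_left hρlt hδ0
        _ = sInf St := by field_simp
    have hρ'notin : δ * ρ ∉ St := fun hmem => absurd (csInf_le hbdd hmem) (not_le.2 hρ'lt)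
    have hρ'big : ENNReal.ofReal ((1+la)/2) * volume (closedBall (ctr a h y (δ*ρ)) (δ*ρ)) <
        volume (E ∩ closedBall (ctr a h y (δ*ρ)) (δ*ρ)) := by
      by_contra hcon
      push_neg at hcon
      exact hρ'notin ⟨hρ'pos, by linarith, hcon⟩
    refine ⟨ρ, hρpos, hρle, hρup', ?_⟩
    have hsub : closedBall (ctr a h y (δ*ρ)) (δ*ρ) ⊆ closedBall (ctr a h y ρ) ρ :=
      cball_ctr_mono hρ'pos.le hρ'ltρ.le
    have hmono : volume (E ∩ closedBall (ctr a h y (δ*ρ)) (δ*ρ)) ≤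
        volume (E ∩ closedBall (ctr a h y ρ) ρ) :=
      measure_mono (Set.inter_subset_inter_right _ hsub)
    have hvol' : volume (closedBall (ctr a h y (δ*ρ)) (δ*ρ)) = ENNReal.ofReal (2*(δ*ρ)) ^ n :=
      vol_cball _ hρ'pos.le
    have hvolρ : volume (closedBall (ctr a h y ρ) ρ) = ENNReal.ofReal (2*ρ) ^ n :=
      vol_cball _ hρpos.le
    have hreal : (1+la)/2 * (2*(δ*ρ))^n = la * (2*ρ)^n := by
      rw [show 2*(δ*ρ) = δ*(2*ρ) by ring, mul_pow, hδn]
      field_simp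
    calc ENNReal.ofReal la * volume (closedBall (ctr a h y ρ) ρ)
        = ENNReal.ofReal (la * (2*ρ)^n) := by
          rw [hvolρ, ← ENNReal.ofReal_pow (by linarith), ← ENNReal.ofReal_mul hla0.le]
      _ = ENNReal.ofReal ((1+la)/2 * (2*(δ*ρ))^n) := by rw [hreal]
      _ = ENNReal.ofReal ((1+la)/2) * volume (closedBall (ctr a h y (δ*ρ)) (δ*ρ)) := by
          rw [hvol', ← ENNReal.ofReal_pow (by linarith), ← ENNReal.ofReal_mul (by linarith)]
      _ < volume (E ∩ closedBall (ctr a h y (δ*ρ)) (δ*ρ)) := hρ'big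
      _ ≤ _ := hmono
  choose! ρf hρ0 hρh hρup hρlow using key
  -- Vitali covering
  obtain ⟨u, huE', hdisj, hcov⟩ :=
    Vitali.exists_disjoint_subfamily_covering_enlargement_closedBall E'
      (fun y => ctr a h y (ρf y)) ρf (h/2) (fun y hy => hρh y hy) 4 (by norm_num)
  set b : (Fin n → ℝ) → Set (Fin n → ℝ) := fun y => closedBall (ctr a h y (ρf y)) (ρf y)
    with hbdef
  have hbQ : ∀ y ∈ E', b y ⊆ Q := fun y hy =>
    cball_ctr_subset (hρ0 y hy).le (by linarith [hρh y hy])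
  have hbG : ∀ y ∈ E', b y ⊆ G := fun y hy =>
    hP _ _ (hρ0 y hy) (hbQ y hy) (hρlow y hy)
  have hbvol : ∀ y ∈ E', volume (b y) = ENNReal.ofReal (2 * ρf y) ^ n :=
    fun y hy => vol_cball _ (hρ0 y hy).le
  have hbpos : ∀ y ∈ E', 0 < volume (b y) := by
    intro y hy
    rw [hbvol y hy]
    exact pos_iff_ne_zero.2 (pow_ne_zero _ (ENNReal.ofReal_pos.2 (by linarith [hρ0 y hy])).ne')
  have hbne : ∀ y ∈ E', volume (b y) ≠ ⊤ := by
    intro y hy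
    rw [hbvol y hy]
    exact ENNReal.pow_ne_top ENNReal.ofReal_ne_top
  -- u is countable
  have hcnt : u.Countable := by
    have hfin : volume (⋃ z : u, b z) ≠ ⊤ := by
      refine ne_top_of_le_ne_top hQne (measure_mono ?_)
      exact Set.iUnion_subset fun z => hbQ z (huE' z.2)
    have hmeas : ∀ z : u, MeasurableSet (b z) := fun z => measurableSet_closedBall
    have hdisj' : Pairwise (Function.onFun Disjoint fun z : u => b z) := by
      intro z w hzw
      exact hdisj z.2 w.2 (Subtype.coe_injective.ne hzw)
    have hctbl := MeasureTheory.Measure.countable_meas_pos_of_disjoint_of_meas_iUnion_ne_top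
      (volume : Measure (Fin n → ℝ)) hmeas hdisj' hfin
    have huniv : {i : u | 0 < volume (b i)} = Set.univ := by
      ext z
      simp only [Set.mem_setOf_eq, Set.mem_univ, iff_true]
      exact hbpos z (huE' z.2)
    rw [huniv] at hctbl
    have : Countable u := Set.countable_univ_iff.1 hctbl
    exact Set.countable_coe_iff.1 this
  -- (i)  μ E ≤ 4^n * Σ'
  have hsum1 : volume E ≤ ENNReal.ofReal ((4:ℝ)^n) * ∑' z : u, volume (b z) := by
    have hEcov : E' ⊆ ⋃ z ∈ u, closedBall (ctr a h z (ρf z)) (4 * ρf z) := by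
      intro y hy
      obtain ⟨z, hzu, hzsub⟩ := hcov y hy
      exact Set.mem_biUnion hzu (hzsub (mem_cball_ctr (hρ0 y hy).le (hEQ (hE'E hy))))
    calc volume E = volume E' := hE'vol.symm
      _ ≤ volume (⋃ z ∈ u, closedBall (ctr a h z (ρf z)) (4 * ρf z)) := measure_mono hEcov
      _ ≤ ∑' z : u, volume (closedBall (ctr a h z (ρf z)) (4 * ρf z)) :=
          measure_biUnion_le _ hcnt _
      _ = ∑' z : u, ENNReal.ofReal ((4:ℝ)^n) * volume (b z) := by
          refine tsum_congr fun z => ?_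
          have hz := huE' z.2
          have h40 : (0:ℝ) ≤ 4 * ρf z := by linarith [hρ0 z hz]
          rw [vol_cball _ h40, hbvol z hz,
            show (2:ℝ) * (4 * ρf z) = 4 * (2 * ρf z) by ring,
            ENNReal.ofReal_mul (by norm_num), mul_pow,
            ← ENNReal.ofReal_pow (by norm_num)]
      _ = ENNReal.ofReal ((4:ℝ)^n) * ∑' z : u, volume (b z) := ENNReal.tsum_mul_left
  -- (ii) μ E + (1-la)/2 * Σ' ≤ μ G
  have hsum2 : volume E + ENNReal.ofReal ((1-la)/2) * ∑' z : u, volume (b z) ≤ volume G := by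
    set X : Set (Fin n → ℝ) := ⋃ z ∈ u, b z with hXdef
    have hXmeas : MeasurableSet X :=
      MeasurableSet.biUnion hcnt fun z _ => measurableSet_closedBall
    have hXG : X ⊆ G := Set.iUnion₂_subset fun z hz => hbG z (huE' hz)
    have hE'G : E' ⊆ G := fun y hy =>
      hbG y hy (mem_cball_ctr (hρ0 y hy).le (hEQ (hE'E hy)))
    have hEX : volume (E ∪ X) ≤ volume G := by
      have h1 : E ∪ X ⊆ (E' ∪ X) ∪ (Bad ∩ E) := by
        intro y hy
        rcases hy with hyE | hyX
        · by_cases hb : y ∈ Bad ∩ E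
          · exact Or.inr hb
          · exact Or.inl (Or.inl ⟨hyE, hb⟩)
        · exact Or.inl (Or.inr hyX)
      calc volume (E ∪ X) ≤ volume ((E' ∪ X) ∪ (Bad ∩ E)) := measure_mono h1
        _ = volume (E' ∪ X) := by
            refine le_antisymm ?_ (measure_mono Set.subset_union_left)
            calc volume ((E' ∪ X) ∪ (Bad ∩ E))
                ≤ volume (E' ∪ X) + volume (Bad ∩ E) := measure_union_le _ _
              _ = volume (E' ∪ X) := by rw [hdens, add_zero]
        _ ≤ volume G := measure_mono (Set.union_subset hE'G hXG)
    have hdecomp : volume (E ∪ X) = volume E + volume (X \ E) := by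
      rw [← Set.union_diff_self]
      exact measure_union disjoint_sdiff_self_right (hXmeas.diff hEm)
    have hXdiff : volume (X \ E) = ∑' z : u, volume (b z \ E) := by
      have hXE : X \ E = ⋃ z ∈ u, (b z \ E) := by
        simp only [hXdef, Set.iUnion_diff]
      rw [hXE]
      exact measure_biUnion hcnt (hdisj.mono fun z => Set.diff_subset)
        fun z hz => measurableSet_closedBall.diff hEm
    have hper : ∀ z : u, ENNReal.ofReal ((1-la)/2) * volume (b z) ≤ volume (b z \ E) := by
      intro z
      have hz := huE' z.2
      have hsplit : volume (b z ∩ E) + volume (b z \ E) = volume (b z) :=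
        measure_inter_add_diff (b z) hEm
      have hEb : volume (b z ∩ E) ≤ ENNReal.ofReal ((1+la)/2) * volume (b z) := by
        rw [Set.inter_comm]; exact hρup z hz
      have hone : ENNReal.ofReal ((1-la)/2) * volume (b z)
          + ENNReal.ofReal ((1+la)/2) * volume (b z) = volume (b z) := by
        rw [← add_mul, ← ENNReal.ofReal_add (by linarith) (by linarith),
          show (1-la)/2 + (1+la)/2 = 1 by ring, ENNReal.ofReal_one, one_mul]
      have hfin2 : ENNReal.ofReal ((1+la)/2) * volume (b z) ≠ ⊤ :=
        ENNReal.mul_ne_top ENNReal.ofReal_ne_top (hbne z hz)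
      have hstep : ENNReal.ofReal ((1-la)/2) * volume (b z)
          + ENNReal.ofReal ((1+la)/2) * volume (b z)
          ≤ volume (b z \ E) + ENNReal.ofReal ((1+la)/2) * volume (b z) := by
        rw [hone]
        calc volume (b z) = volume (b z ∩ E) + volume (b z \ E) := hsplit.symm
          _ ≤ ENNReal.ofReal ((1+la)/2) * volume (b z) + volume (b z \ E) :=
              add_le_add_left hEb _
          _ = volume (b z \ E) + ENNReal.ofReal ((1+la)/2) * volume (b z) := add_comm _ _
      exact (ENNReal.add_le_add_iff_right hfin2).1 hstep
    have htsum : ENNReal.ofReal ((1-la)/2) * ∑' z : u, volume (b z)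
        ≤ ∑' z : u, volume (b z \ E) := by
      rw [← ENNReal.tsum_mul_left]
      exact ENNReal.tsum_le_tsum hper
    calc volume E + ENNReal.ofReal ((1-la)/2) * ∑' z : u, volume (b z)
        ≤ volume E + volume (X \ E) := add_le_add_right (htsum.trans hXdiff.symm.le) _
      _ = volume (E ∪ X) := hdecomp.symm
      _ ≤ volume G := hEX
  -- conclusion
  have hA0 : (0:ℝ) < (4:ℝ)^n := by positivity
  have hc2 : (0:ℝ) < (1-la)/2 := by linarith
  have h1 : ENNReal.ofReal ((4:ℝ)^n + (1-la)/2) * volume E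
      ≤ ENNReal.ofReal ((4:ℝ)^n) * volume G := by
    rw [ENNReal.ofReal_add hA0.le hc2.le, add_mul]
    have t1 : ENNReal.ofReal ((1-la)/2) * volume E
        ≤ ENNReal.ofReal ((1-la)/2) * (ENNReal.ofReal ((4:ℝ)^n) * ∑' z : u, volume (b z)) :=
      mul_le_mul_right hsum1 _
    calc ENNReal.ofReal ((4:ℝ)^n) * volume E + ENNReal.ofReal ((1-la)/2) * volume E
        ≤ ENNReal.ofReal ((4:ℝ)^n) * volume E
          + ENNReal.ofReal ((1-la)/2) * (ENNReal.ofReal ((4:ℝ)^n) * ∑' z : u, volume (b z)) :=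
          add_le_add_right t1 _
      _ = ENNReal.ofReal ((4:ℝ)^n)
          * (volume E + ENNReal.ofReal ((1-la)/2) * ∑' z : u, volume (b z)) := by ring
      _ ≤ ENNReal.ofReal ((4:ℝ)^n) * volume G := mul_le_mul_right hsum2 _
  have hAc : (0:ℝ) < (4:ℝ)^n + (1-la)/2 := by linarith
  calc volume E
      = ENNReal.ofReal (((4:ℝ)^n + (1-la)/2)⁻¹)
        * (ENNReal.ofReal ((4:ℝ)^n + (1-la)/2) * volume E) := by
        rw [← mul_assoc, ← ENNReal.ofReal_mul (by positivity),
          inv_mul_cancel₀ hAc.ne', ENNReal.ofReal_one, one_mul]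
    _ ≤ ENNReal.ofReal (((4:ℝ)^n + (1-la)/2)⁻¹) * (ENNReal.ofReal ((4:ℝ)^n) * volume G) :=
        mul_le_mul_right h1 _
    _ = ENNReal.ofReal ((4:ℝ)^n / ((4:ℝ)^n + (1-la)/2)) * volume G := by
        rw [← mul_assoc, ← ENNReal.ofReal_mul (by positivity)]
        congr 2
        ring

end Core


/-- Lemma 7 of the paper: `m_{γη} f ≤ m_η (m_λ f)` pointwise. -/
theorem stmt6 (n : ℕ) (la : ℝ) (hla : la ∈ Set.Ioo (0 : ℝ) 1) :
    ∃ ga : ℝ, ga ∈ Set.Ioo (0 : ℝ) 1 ∧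
      ∀ η : ℝ, η ∈ Set.Ioo (0 : ℝ) 1 →
      ∀ f : (Fin n → ℝ) → ℝ, Measurable f →
      ∀ x : Fin n → ℝ,
        mMed (ga * η) (toE f) x ≤ mMed η (mMed la (toE f)) x := by
  obtain ⟨hla0, hla1⟩ := hla
  have hA0 : (0:ℝ) < 4^n := by positivity
  have hc2 : (0:ℝ) < (1-la)/2 := by linarith
  refine ⟨(4:ℝ)^n / ((4:ℝ)^n + (1-la)/2), ⟨by positivity, ?_⟩, ?_⟩
  · rw [div_lt_one (by linarith)]; linarith
  set ga : ℝ := (4:ℝ)^n / ((4:ℝ)^n + (1-la)/2) with hgadef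
  have hga0 : 0 < ga := by positivity
  rintro η ⟨hη0, hη1⟩ f hf x
  rw [mMed]
  refine iSup_le fun Q => iSup_le fun hQ => iSup_le fun hxQ => ?_
  obtain ⟨a, h, hh, rfl⟩ := hQ
  set Q : Set (Fin n → ℝ) := Set.Icc a (fun i => a i + h) with hQdef
  have hQcube : IsCube Q := ⟨a, h, hh, rfl⟩
  set g : (Fin n → ℝ) → ℝ≥0∞ := mMed la (toE f) with hgdef
  refine le_trans ?_ (le_mMed (la := η) (f := g) hQcube hxQ)
  refine le_of_forall_gt_imp_ge_of_dense fun β' hβ' => ?_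
  rcases eq_or_ne β' ⊤ with rfl | hβ'top
  · exact le_top
  rw [rearr] at hβ'
  obtain ⟨β, hβmem, hββ'⟩ := sInf_lt_iff.1 hβ'
  obtain ⟨hβ0, hβvol⟩ := hβmem
  have hβ'0 : (0:ℝ≥0∞) < β' := hβ0.trans hββ'
  have hQvol : volume Q = ENNReal.ofReal h ^ n := vol_Icc a hh.le
  have hQne0 : volume Q ≠ 0 := by
    rw [hQvol]; exact pow_ne_zero _ (ENNReal.ofReal_pos.2 hh).ne'
  have hQnetop : volume Q ≠ ⊤ := by
    rw [hQvol]; exact ENNReal.pow_ne_top ENNReal.ofReal_ne_top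
  set E : Set (Fin n → ℝ) := {y | β' < toE f y} ∩ Q with hEdef
  have htoE : Measurable (toE f) := ENNReal.measurable_ofReal.comp hf.abs
  have hEm : MeasurableSet E :=
    (measurableSet_lt measurable_const htoE).inter measurableSet_Icc
  set Gs : Set (Fin n → ℝ) := {y | β < Q.indicator g y} with hGdef
  have hP : ∀ (c : Fin n → ℝ) (ρ : ℝ), 0 < ρ →
      Metric.closedBall c ρ ⊆ Q →
      ENNReal.ofReal la * volume (Metric.closedBall c ρ) <
        volume (E ∩ Metric.closedBall c ρ) →
      Metric.closedBall c ρ ⊆ Gs := by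
    intro c ρ hρ hsub hlt z hz
    have hzQ : z ∈ Q := hsub hz
    show β < Q.indicator g z
    rw [Set.indicator_of_mem hzQ]
    have h1 : β' ≤ rearr ((Metric.closedBall c ρ).indicator (toE f))
        (ENNReal.ofReal la * volume (Metric.closedBall c ρ)) := by
      apply rearr_ball_ge
      refine lt_of_lt_of_le hlt (measure_mono ?_)
      rintro w ⟨hw1, hw2⟩
      exact ⟨hw1.1, hw2⟩
    have h2 := le_mMed (la := la) (f := toE f) (isCube_cball c hρ) hz
    exact lt_of_lt_of_le hββ' (h1.trans h2)
  by_cases hbig : volume E ≤ ENNReal.ofReal ((1+la)/2) * volume Q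
  · have hcore := core_lemma ⟨hla0, hla1⟩ a hh E Gs hEm Set.inter_subset_right hbig hP
    rw [rearr]
    apply sInf_le
    refine ⟨hβ'0, ?_⟩
    have hEeq : {y | β' < Q.indicator (toE f) y} = E := by
      ext y
      simp only [Set.mem_setOf_eq, hEdef, Set.mem_inter_iff, Set.mem_setOf_eq]
      by_cases hy : y ∈ Q
      · rw [Set.indicator_of_mem hy]
        exact (and_iff_left hy).symm
      · rw [Set.indicator_of_notMem hy]
        simp [hy]
    rw [hEeq]
    calc volume E ≤ ENNReal.ofReal ga * volume Gs := hcore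
      _ ≤ ENNReal.ofReal ga * (ENNReal.ofReal η * volume Q) := mul_le_mul_right hβvol _
      _ = ENNReal.ofReal (ga * η) * volume Q := by
          rw [← mul_assoc, ← ENNReal.ofReal_mul hga0.le]
  · exfalso
    push_neg at hbig
    have hEQ' : E ⊆ Q := Set.inter_subset_right
    have hlt : ENNReal.ofReal la * volume Q < volume (E ∩ Q) := by
      rw [Set.inter_eq_left.2 hEQ']
      calc ENNReal.ofReal la * volume Q
          < ENNReal.ofReal ((1+la)/2) * volume Q :=
            (ENNReal.mul_lt_mul_iff_left hQne0 hQnetop).2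
              ((ENNReal.ofReal_lt_ofReal_iff (by linarith)).2 (by linarith))
        _ < volume E := hbig
    have hQcb : Q = Metric.closedBall (fun i => a i + h/2) (h/2) := Icc_eq_cball a hh.le
    have hQG : Metric.closedBall (fun i => a i + h/2) (h/2) ⊆ Gs :=
      hP _ _ (by linarith) (by rw [← hQcb]) (by rw [← hQcb]; exact hlt)
    rw [← hQcb] at hQG
    have hle1 : volume Q ≤ volume Gs := measure_mono hQG
    have hlt2 : volume Gs < volume Q := by
      refine lt_of_le_of_lt hβvol ?_
      calc ENNReal.ofReal η * volume Q < 1 * volume Q :=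
            (ENNReal.mul_lt_mul_iff_left hQne0 hQnetop).2 (ENNReal.ofReal_lt_one.2 hη1)
        _ = volume Q := one_mul _
    exact lt_irrefl _ (lt_of_le_of_lt hle1 hlt2)
end
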